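/- arXiv:2512.22805 — 11 statements merged into one kernel-verified Lean document; each statement's English description precedes it below -/
import Mathlib

section
/- The 5-cycle C5 admits no proper conflict-free coloring using only 4 colors; that is, for every proper vertex coloring of C5 with at most 4 colors, some vertex has no color appearing exactly once in its open neighborhood. Consequently, the proper conflict-free chromatic number of C5 equals 5. -/
/-- A proper conflict-free coloring of `G`: a proper coloring such that every
non-isolated vertex has some color appearing exactly once in its open neighborhood. -/
def IsPCF {V β : Type*} (G : SimpleGraph V) (φ : V → β) : Prop :=
  (∀ ⦃a b : V⦄, G.Adj a b → φ a ≠ φ b) ∧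
  ∀ v : V, (∃ u, G.Adj v u) → ∃ c : β, ∃! u : V, G.Adj v u ∧ φ u = c

/-- The cycle on `n` vertices, as a graph on `ZMod n`. -/
def Cyc (n : ℕ) : SimpleGraph (ZMod n) :=
  SimpleGraph.fromRel (fun a b => a - b = 1)

lemma cyc5_adj_iff (v u : ZMod 5) : (Cyc 5).Adj v u ↔ u = v + 1 ∨ u = v - 1 := by
  simp only [Cyc, SimpleGraph.fromRel_adj]
  revert v u; decide

lemma isPCF_cyc5_iff {β : Type*} (φ : ZMod 5 → β) :
    IsPCF (Cyc 5) φ ↔ (∀ v, φ v ≠ φ (v + 1)) ∧ (∀ v, φ v ≠ φ (v + 2)) := by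
  constructor
  · rintro ⟨hp, hc⟩
    constructor
    · intro v
      exact hp ((cyc5_adj_iff v (v + 1)).2 (Or.inl rfl))
    · intro v
      obtain ⟨c, u, ⟨hadj, hu⟩, huniq⟩ := hc (v + 1)
        ⟨v + 2, (cyc5_adj_iff (v + 1) (v + 2)).2 (Or.inl (by ring))⟩
      intro heq
      have hne : v ≠ v + 2 := (by decide : ∀ w : ZMod 5, w ≠ w + 2) v
      have h1 : (Cyc 5).Adj (v + 1) (v + 2) :=
        (cyc5_adj_iff (v + 1) (v + 2)).2 (Or.inl (by ring))
      have h2 : (Cyc 5).Adj (v + 1) v :=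
        (cyc5_adj_iff (v + 1) v).2 (Or.inr (by ring))
      rcases (cyc5_adj_iff (v + 1) u).1 hadj with h | h
      · have hv2 : v + 1 + 1 = v + 2 := by ring
        have hc2 : φ (v + 2) = c := by rw [← hv2, ← h]; exact hu
        have e1 := huniq (v + 2) ⟨h1, hc2⟩
        have e2 := huniq v ⟨h2, by rw [heq, hc2]⟩
        exact hne (e2.trans e1.symm)
      · have hv0 : v + 1 - 1 = v := by ring
        have hc0 : φ v = c := by rw [← hv0, ← h]; exact hu
        have e1 := huniq (v + 2) ⟨h1, by rw [← heq, hc0]⟩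
        have e2 := huniq v ⟨h2, hc0⟩
        exact hne (e2.trans e1.symm)
  · rintro ⟨h1, h2⟩
    constructor
    · intro a b hab
      rcases (cyc5_adj_iff a b).1 hab with h | h
      · rw [h]; exact h1 a
      · have : a = b + 1 := by rw [h]; ring
        rw [this]; exact (h1 b).symm
    · intro v _
      refine ⟨φ (v + 1), v + 1, ⟨(cyc5_adj_iff v (v + 1)).2 (Or.inl rfl), rfl⟩, ?_⟩
      rintro y ⟨hadj, hy⟩
      rcases (cyc5_adj_iff v y).1 hadj with h | h
      · exact h
      · exfalso
        have hv : v - 1 + 2 = v + 1 := by ring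
        exact h2 (v - 1) (by rw [hv, ← h, hy])

lemma cyc5_inj {β : Type*} (φ : ZMod 5 → β)
    (h1 : ∀ v, φ v ≠ φ (v + 1)) (h2 : ∀ v, φ v ≠ φ (v + 2)) :
    Function.Injective φ := by
  intro x y hxy
  by_contra hne
  have key : ∀ x y : ZMod 5, x ≠ y → y = x + 1 ∨ y = x + 2 ∨ x = y + 1 ∨ x = y + 2 := by
    decide
  rcases key x y hne with h | h | h | h
  · exact h1 x (by rw [← h]; exact hxy)
  · exact h2 x (by rw [← h]; exact hxy)
  · exact h1 y (by rw [← h]; exact hxy.symm)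
  · exact h2 y (by rw [← h]; exact hxy.symm)

lemma no_pcf_four (φ : ZMod 5 → Fin 4) : ¬ IsPCF (Cyc 5) φ := by
  rw [isPCF_cyc5_iff]
  rintro ⟨h1, h2⟩
  have := Fintype.card_le_of_injective φ (cyc5_inj φ h1 h2)
  simp [ZMod.card] at this

/-- C5 admits no proper conflict-free coloring with 4 colors, and its proper
conflict-free chromatic number is exactly 5. -/
theorem stmt0 :
    (∀ φ : ZMod 5 → Fin 4, ¬ IsPCF (Cyc 5) φ) ∧
    IsLeast {k : ℕ | ∃ φ : ZMod 5 → Fin k, IsPCF (Cyc 5) φ} 5 := by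
  refine ⟨no_pcf_four, ⟨?_, ?_⟩⟩
  · refine ⟨fun v => ⟨v.val, v.val_lt⟩, (isPCF_cyc5_iff _).2 ⟨?_, ?_⟩⟩
    · decide
    · decide
  · intro k hk
    obtain ⟨φ, hφ⟩ := hk
    by_contra hlt
    push_neg at hlt
    have hk4 : k ≤ 4 := by omega
    have hpcf : IsPCF (Cyc 5) (fun v => Fin.castLE hk4 (φ v)) := by
      rw [isPCF_cyc5_iff] at hφ ⊢
      exact ⟨fun v h => hφ.1 v (Fin.castLE_injective hk4 h),
             fun v h => hφ.2 v (Fin.castLE_injective hk4 h)⟩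
    exact no_pcf_four _ hpcf
end

section
/- For every cycle C_n with n ≥ 3 and n not divisible by 3, every proper conflict-free coloring of C_n uses at least 4 colors; that is, C_n is not proper conflict-free 3-colorable. -/
lemma fin3_key : ∀ a b c d : Fin 3, a ≠ b → c ≠ a → c ≠ b → d ≠ a → d ≠ b → c = d := by
  decide

/-- For `n ≥ 3` not divisible by 3, the cycle `C_n` has no proper conflict-free
3-coloring (so any proper conflict-free coloring uses at least 4 colors). -/
theorem stmt2 (n : ℕ) (hn : 3 ≤ n) (hdvd : ¬ 3 ∣ n) :
    ∀ φ : ZMod n → Fin 3, ¬ IsPCF (Cyc n) φ := by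
  haveI : NeZero n := ⟨by omega⟩
  haveI : Fact (1 < n) := ⟨by omega⟩
  intro φ ⟨hprop, hcf⟩
  have h1 : (1 : ZMod n) ≠ 0 := one_ne_zero
  have h2 : (2 : ZMod n) ≠ 0 := by
    intro h
    have : ((2 : ℕ) : ZMod n) = 0 := by push_cast; exact h
    have := Nat.le_of_dvd (by norm_num) ((ZMod.natCast_eq_zero_iff 2 n).mp this)
    omega
  have hadj : ∀ v : ZMod n, (Cyc n).Adj v (v + 1) := by
    intro v
    rw [Cyc, SimpleGraph.fromRel_adj]
    refine ⟨?_, Or.inr (by ring)⟩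
    intro h
    exact h1 (by linear_combination -h)
  have hadj' : ∀ v : ZMod n, (Cyc n).Adj v (v - 1) := by
    intro v
    rw [Cyc, SimpleGraph.fromRel_adj]
    refine ⟨?_, Or.inl (by ring)⟩
    intro h
    exact h1 (by linear_combination h)
  -- proper: φ v ≠ φ (v+1)
  have hp : ∀ v : ZMod n, φ v ≠ φ (v + 1) := fun v => hprop (hadj v)
  -- neighbors characterization
  have hnbr : ∀ v u : ZMod n, (Cyc n).Adj v u → u = v - 1 ∨ u = v + 1 := by
    intro v u h
    rw [Cyc, SimpleGraph.fromRel_adj] at h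
    rcases h.2 with h' | h'
    · left; linear_combination -h'
    · right; linear_combination h'
  -- conflict-free: φ (v-1) ≠ φ (v+1)
  have hc : ∀ v : ZMod n, φ (v - 1) ≠ φ (v + 1) := by
    intro v heq
    obtain ⟨c, u, ⟨hu, huc⟩, huniq⟩ := hcf v ⟨v + 1, hadj v⟩
    have hcval : c = φ (v + 1) := by
      rcases hnbr v u hu with h | h
      · rw [← huc, h, heq]
      · rw [← huc, h]
    have e1 : v - 1 = u := huniq (v - 1) ⟨hadj' v, by rw [heq, ← hcval]⟩
    have e2 : v + 1 = u := huniq (v + 1) ⟨hadj v, hcval.symm⟩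
    exact h2 (by linear_combination e2 - e1)
  -- period 3
  have hstep : ∀ w : ZMod n, φ (w + 3) = φ w := by
    intro w
    have a1 : φ (w + 1) ≠ φ (w + 2) := by
      have := hp (w + 1); rwa [show w + 1 + 1 = w + 2 by ring] at this
    have a2 : φ (w + 3) ≠ φ (w + 1) := by
      have := hc (w + 2)
      rw [show w + 2 - 1 = w + 1 by ring, show w + 2 + 1 = w + 3 by ring] at this
      exact this.symm
    have a3 : φ (w + 3) ≠ φ (w + 2) := by
      have := hp (w + 2); rw [show w + 2 + 1 = w + 3 by ring] at this
      exact this.symm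
    have a4 : φ w ≠ φ (w + 1) := hp w
    have a5 : φ w ≠ φ (w + 2) := by
      have := hc (w + 1)
      rwa [show w + 1 - 1 = w by ring, show w + 1 + 1 = w + 2 by ring] at this
    exact fin3_key _ _ _ _ a1 a2 a3 a4 a5
  have hper : ∀ (m : ℕ) (v : ZMod n), φ (v + 3 * (m : ZMod n)) = φ v := by
    intro m
    induction m with
    | zero => intro v; simp
    | succ k ih =>
      intro v
      have : v + 3 * ((k + 1 : ℕ) : ZMod n) = (v + 3 * (k : ZMod n)) + 3 := by
        push_cast; ring
      rw [this, hstep, ih]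
  -- 3 is invertible
  have hcop : Nat.Coprime 3 n := (Nat.Prime.coprime_iff_not_dvd (by norm_num)).mpr hdvd
  have hunit : IsUnit ((3 : ℕ) : ZMod n) := (ZMod.isUnit_iff_coprime 3 n).mpr hcop
  obtain ⟨w, hw⟩ := hunit.exists_right_inv
  obtain ⟨m, hm⟩ := ZMod.natCast_zmod_surjective w
  have key : (3 : ZMod n) * (m : ZMod n) = 1 := by
    rw [hm]; push_cast at hw ⊢; exact hw
  have : φ (0 + 1) = φ 0 := by
    rw [← key]
    exact hper m 0
  rw [zero_add] at this; exact absurd this.symm (by simpa using hp 0)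
end

section
/- Every graph G with maximum degree Δ ≥ 1 admits a proper conflict-free coloring from any list assignment giving each vertex a list of 2Δ + 1 colors; that is, G is proper conflict-free (2Δ+1)-choosable. -/
open Finset
open scoped Classical

section PCFaux
variable {V : Type*} [Fintype V] (G : SimpleGraph V) [DecidableRel G.Adj] (L : V → Finset ℕ)

noncomputable def pcfIdx (v : V) : ℕ := ((Fintype.equivFin V) v : ℕ)

lemma pcfIdx_inj : Function.Injective (pcfIdx (V := V)) :=
  fun a b h => (Fintype.equivFin V).injective (Fin.val_injective h)

noncomputable def pcfF (v : V) : V :=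
  if h : (G.neighborFinset v).Nonempty then
    Classical.choose (Finset.exists_min_image (G.neighborFinset v) pcfIdx h)
  else v

lemma pcfF_adj {v : V} (h : (G.neighborFinset v).Nonempty) : G.Adj v (pcfF G v) := by
  rw [pcfF, dif_pos h]
  have := (Classical.choose_spec (Finset.exists_min_image (G.neighborFinset v) pcfIdx h)).1
  exact (SimpleGraph.mem_neighborFinset _ _ _).1 this

lemma pcfF_min {v u : V} (h : (G.neighborFinset v).Nonempty)
    (hu : u ∈ G.neighborFinset v) : pcfIdx (pcfF G v) ≤ pcfIdx u := by
  rw [pcfF, dif_pos h]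
  exact (Classical.choose_spec (Finset.exists_min_image (G.neighborFinset v) pcfIdx h)).2 u hu

noncomputable def pcfCol : V → ℕ := fun v =>
  let S : Finset ℕ :=
    ((G.neighborFinset v).filter (fun u => pcfIdx u < pcfIdx v)).attach.image
      (fun u => pcfCol u.1) ∪
    ((G.neighborFinset v).filter (fun u => pcfF G u ≠ v)).attach.image
      (fun u => pcfCol (pcfF G u.1))
  if h : (L v \ S).Nonempty then (L v \ S).min' h else 0
termination_by v => pcfIdx v
decreasing_by
  · exact (Finset.mem_filter.1 u.2).2
  · rename_i v
    have hu := Finset.mem_filter.1 u.2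
    have hadj : G.Adj v u.1 := (SimpleGraph.mem_neighborFinset _ _ _).1 hu.1
    have hne : (G.neighborFinset u.1).Nonempty := ⟨v, (SimpleGraph.mem_neighborFinset _ _ _).2 hadj.symm⟩
    have hle := pcfF_min G hne ((SimpleGraph.mem_neighborFinset _ _ _).2 hadj.symm)
    exact lt_of_le_of_ne hle (fun hc => hu.2 (pcfIdx_inj hc))

noncomputable def pcfA (v : V) : Finset ℕ :=
  ((G.neighborFinset v).filter (fun u => pcfIdx u < pcfIdx v)).attach.image
    (fun u => pcfCol G L u.1)

noncomputable def pcfB (v : V) : Finset ℕ :=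
  ((G.neighborFinset v).filter (fun u => pcfF G u ≠ v)).attach.image
    (fun u => pcfCol G L (pcfF G u.1))

lemma pcfCol_mem (hL : ∀ v, (L v).card = 2 * G.maxDegree + 1) (v : V) :
    pcfCol G L v ∈ L v \ (pcfA G L v ∪ pcfB G L v) := by
  have hcardA : (pcfA G L v).card ≤ G.maxDegree := by
    calc (pcfA G L v).card ≤ _ := Finset.card_image_le
    _ = ((G.neighborFinset v).filter (fun u => pcfIdx u < pcfIdx v)).card := Finset.card_attach
    _ ≤ (G.neighborFinset v).card := Finset.card_filter_le _ _
    _ ≤ G.maxDegree := G.degree_le_maxDegree v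
  have hcardB : (pcfB G L v).card ≤ G.maxDegree := by
    calc (pcfB G L v).card ≤ _ := Finset.card_image_le
    _ = ((G.neighborFinset v).filter (fun u => pcfF G u ≠ v)).card := Finset.card_attach
    _ ≤ (G.neighborFinset v).card := Finset.card_filter_le _ _
    _ ≤ G.maxDegree := G.degree_le_maxDegree v
  have hne : (L v \ (pcfA G L v ∪ pcfB G L v)).Nonempty := by
    have h1 : (pcfA G L v ∪ pcfB G L v).card ≤ 2 * G.maxDegree := by
      calc (pcfA G L v ∪ pcfB G L v).card ≤ _ := Finset.card_union_le _ _
      _ ≤ 2 * G.maxDegree := by omega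
    have h2 := Finset.le_card_sdiff (pcfA G L v ∪ pcfB G L v) (L v)
    rw [← Finset.card_pos]
    have := hL v
    omega
  rw [pcfA, pcfB] at hne ⊢
  rw [pcfCol, dif_pos hne]
  exact Finset.min'_mem _ _

lemma pcf_notA (hL : ∀ v, (L v).card = 2 * G.maxDegree + 1) {v u : V}
    (hadj : G.Adj v u) (hlt : pcfIdx u < pcfIdx v) : pcfCol G L u ≠ pcfCol G L v := by
  intro hc
  have hmem := pcfCol_mem G L hL v
  rw [Finset.mem_sdiff] at hmem
  apply hmem.2
  apply Finset.mem_union_left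
  rw [pcfA]
  have hu : u ∈ (G.neighborFinset v).filter (fun u => pcfIdx u < pcfIdx v) :=
    Finset.mem_filter.2 ⟨(SimpleGraph.mem_neighborFinset _ _ _).2 hadj, hlt⟩
  rw [← hc]
  exact Finset.mem_image.2 ⟨⟨u, hu⟩, Finset.mem_attach _ _, rfl⟩

lemma pcf_notB (hL : ∀ v, (L v).card = 2 * G.maxDegree + 1) {v u : V}
    (hadj : G.Adj v u) (hne : pcfF G u ≠ v) : pcfCol G L (pcfF G u) ≠ pcfCol G L v := by
  intro hc
  have hmem := pcfCol_mem G L hL v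
  rw [Finset.mem_sdiff] at hmem
  apply hmem.2
  apply Finset.mem_union_right
  rw [pcfB]
  have hu : u ∈ (G.neighborFinset v).filter (fun u => pcfF G u ≠ v) :=
    Finset.mem_filter.2 ⟨(SimpleGraph.mem_neighborFinset _ _ _).2 hadj, hne⟩
  rw [← hc]
  exact Finset.mem_image.2 ⟨⟨u, hu⟩, Finset.mem_attach _ _, rfl⟩

end PCFaux

/-- Every graph with maximum degree `Δ ≥ 1` is proper conflict-free
`(2Δ+1)`-choosable. -/
theorem stmt3 {V : Type*} [Fintype V] (G : SimpleGraph V) [DecidableRel G.Adj]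
    (hΔ : 1 ≤ G.maxDegree) (L : V → Finset ℕ)
    (hL : ∀ v, (L v).card = 2 * G.maxDegree + 1) :
    ∃ φ : V → ℕ, (∀ v, φ v ∈ L v) ∧ IsPCF G φ := by
  refine ⟨pcfCol G L, fun v => (Finset.mem_sdiff.1 (pcfCol_mem G L hL v)).1, ?_, ?_⟩
  · intro a b hab hc
    rcases lt_or_gt_of_ne (fun h : pcfIdx a = pcfIdx b => hab.ne (pcfIdx_inj h)) with h | h
    · exact pcf_notA G L hL hab.symm h hc
    · exact pcf_notA G L hL hab h hc.symm
  · rintro v ⟨u, hu⟩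
    have hnon : (G.neighborFinset v).Nonempty := ⟨u, (SimpleGraph.mem_neighborFinset _ _ _).2 hu⟩
    refine ⟨pcfCol G L (pcfF G v), pcfF G v, ⟨pcfF_adj G hnon, rfl⟩, ?_⟩
    rintro w ⟨hadj, hc⟩
    by_contra hne
    exact pcf_notB G L hL hadj.symm (fun h => hne h.symm) hc.symm
end

section
/- Every d-degenerate graph is proper conflict-free (degree + d + 1)-choosable: given any list assignment L with |L(v)| = d(v) + d + 1 for every vertex v, there is a proper conflict-free L-coloring. -/
/-- `G` is `d`-degenerate: every (nonempty, induced) subgraph has a vertex of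
degree at most `d` inside it. -/
def Degenerate {V : Type*} (G : SimpleGraph V) [DecidableRel G.Adj] (d : ℕ) : Prop :=
  ∀ s : Finset V, s.Nonempty → ∃ v ∈ s, (s.filter (fun u => G.Adj v u)).card ≤ d

open Finset Function

namespace SimpleGraph

variable {V β : Type*} (G : SimpleGraph V)

def IsUniqueColorNeighbor (s : Set V) (φ : V → β) (w u : V) : Prop :=
  u ∈ s ∧ G.Adj w u ∧ ∀ x ∈ s, G.Adj w x → φ x = φ u → x = u

structure IsPCFOn (s : Set V) (φ : V → β) : Prop where
  proper : ∀ ⦃a b⦄, a ∈ s → b ∈ s → G.Adj a b → φ a ≠ φ b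
  exists_isUniqueColorNeighbor :
    ∀ w, (∃ u ∈ s, G.Adj w u) → ∃ u, G.IsUniqueColorNeighbor s φ w u

variable {G}

theorem isPCFOn_empty (φ : V → β) : G.IsPCFOn ∅ φ :=
  ⟨by simp, by simp⟩

theorem IsPCFOn.isPCF {φ : V → β} (h : G.IsPCFOn Set.univ φ) : IsPCF G φ := by
  refine ⟨fun a b hab => h.proper trivial trivial hab, fun w ⟨u, hwu⟩ => ?_⟩
  obtain ⟨u', -, hwu', huniq⟩ := h.exists_isUniqueColorNeighbor w ⟨u, trivial, hwu⟩
  exact ⟨φ u', u', ⟨hwu', rfl⟩, fun x ⟨hwx, hx⟩ => huniq x trivial hwx hx⟩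

theorem isUniqueColorNeighbor_insert_of_forall_not_adj {t : Set V} {v w : V} (ψ : V → β)
    (h : ∀ x ∈ t, ¬G.Adj w x) (hwv : G.Adj w v) : G.IsUniqueColorNeighbor (insert v t) ψ w v :=
  ⟨Set.mem_insert v t, hwv, fun x hx hwx _ => hx.resolve_right fun hxt => h x hxt hwx⟩

section Insert

variable [DecidableEq V] {t : Set V} {φ : V → β} {v w u : V} {c : β}

theorem IsUniqueColorNeighbor.update_insert (h : G.IsUniqueColorNeighbor t φ w u) (hv : v ∉ t)
    (hc : G.Adj w v → c ≠ φ u) : G.IsUniqueColorNeighbor (insert v t) (update φ v c) w u := by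
  obtain ⟨hut, hwu, huniq⟩ := h
  have huv : u ≠ v := fun h => hv (h ▸ hut)
  refine ⟨Set.mem_insert_of_mem v hut, hwu, fun x hx hwx hφx => ?_⟩
  rw [update_of_ne huv] at hφx
  rcases hx with rfl | hxt
  · rw [update_self] at hφx
    exact absurd hφx (hc hwx)
  · rw [update_of_ne (ne_of_mem_of_not_mem hxt hv)] at hφx
    exact huniq x hxt hwx hφx

theorem IsPCFOn.update_insert (h : G.IsPCFOn t φ) (hv : v ∉ t) (u : V → V)
    (hu : ∀ w, (∃ x ∈ t, G.Adj w x) → G.IsUniqueColorNeighbor t φ w (u w))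
    (hc_proper : ∀ x ∈ t, G.Adj v x → c ≠ φ x) (hc_unique : ∀ w, G.Adj v w → c ≠ φ (u w)) :
    G.IsPCFOn (insert v t) (update φ v c) := by
  have hc_proper' : ∀ ⦃a b⦄, a = v → b ∈ t → G.Adj a b → update φ v c a ≠ update φ v c b := by
    rintro a b rfl hb hab
    rw [update_self, update_of_ne (ne_of_mem_of_not_mem hb hv)]
    exact hc_proper b hb hab
  refine ⟨?_, fun w hw => ?_⟩
  · rintro a b (ha | ha) (hb | hb) hab
    · exact absurd (ha ▸ hb ▸ hab) G.irrefl
    · exact hc_proper' ha hb hab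
    · exact (hc_proper' hb ha hab.symm).symm
    · rw [update_of_ne (ne_of_mem_of_not_mem ha hv), update_of_ne (ne_of_mem_of_not_mem hb hv)]
      exact h.proper ha hb hab
  by_cases hwt : ∃ x ∈ t, G.Adj w x
  · exact ⟨u w, (hu w hwt).update_insert hv fun hwv => hc_unique w hwv.symm⟩
  · push Not at hwt
    obtain ⟨x, hx, hwx⟩ := hw
    have hxv : x = v := hx.resolve_right fun hxt => hwt x hxt hwx
    exact ⟨v, isUniqueColorNeighbor_insert_of_forall_not_adj _ hwt (hxv ▸ hwx)⟩

theorem IsPCFOn.exists_update_insert [Fintype V] [DecidableRel G.Adj] [DecidableEq β]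
    {t : Finset V} (h : G.IsPCFOn t φ) (hv : v ∉ t) (L : Finset β)
    (hL : #(t.filter (G.Adj v)) + G.degree v < #L) :
    ∃ c ∈ L, G.IsPCFOn (insert v t : Finset V) (update φ v c) := by
  have : Nonempty V := ⟨v⟩
  choose! u hu using h.exists_isUniqueColorNeighbor
  let forbidden : Finset β := (t.filter (G.Adj v)).image φ ∪ (G.neighborFinset v).image (φ ∘ u)
  have hcard : #forbidden < #L :=
    calc #forbidden
        ≤ #(t.filter (G.Adj v)) + #(G.neighborFinset v) :=
          (card_union_le _ _).trans (add_le_add card_image_le card_image_le)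
      _ < #L := by rwa [card_neighborFinset_eq_degree]
  obtain ⟨c, hcL, hc⟩ := exists_mem_notMem_of_card_lt_card hcard
  refine ⟨c, hcL, ?_⟩
  rw [coe_insert]
  refine h.update_insert hv u hu (fun x hx hvx hcx => hc ?_) (fun w hvw hcw => hc ?_)
  · exact mem_union_left _ (mem_image.2 ⟨x, mem_filter.2 ⟨hx, hvx⟩, hcx.symm⟩)
  · exact mem_union_right _ (mem_image.2 ⟨w, (G.mem_neighborFinset v w).2 hvw, hcw.symm⟩)

end Insert

theorem exists_isPCFOn_of_degenerate [Fintype V] [DecidableEq V] [DecidableRel G.Adj]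
    [DecidableEq β] {d : ℕ} (hdeg : Degenerate G d) (L : V → Finset β)
    (hL : ∀ v, G.degree v + d < #(L v)) (s : Finset V) :
    ∃ φ : V → β, (∀ v ∈ s, φ v ∈ L v) ∧ G.IsPCFOn s φ := by
  induction s using Finset.strongInduction with
  | _ s ih =>
  obtain rfl | hs := s.eq_empty_or_nonempty
  · have hL_nonempty : ∀ v, (L v).Nonempty := fun v => card_pos.1 (by have := hL v; omega)
    exact ⟨fun v => (hL_nonempty v).choose, fun v _ => (hL_nonempty v).choose_spec,
      by simpa using isPCFOn_empty _⟩
  obtain ⟨v, hvs, hvd⟩ := hdeg s hs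
  obtain ⟨φ, hφL, hφ⟩ := ih (s.erase v) (erase_ssubset hvs)
  have hfewer : #((s.erase v).filter (G.Adj v)) + G.degree v < #(L v) :=
    calc #((s.erase v).filter (G.Adj v)) + G.degree v
        ≤ d + G.degree v := by
          gcongr
          exact (card_le_card (filter_subset_filter _ (erase_subset v s))).trans hvd
      _ < #(L v) := by rw [add_comm]; exact hL v
  obtain ⟨c, hcL, hc⟩ := hφ.exists_update_insert (notMem_erase v s) _ hfewer
  rw [insert_erase hvs] at hc
  refine ⟨update φ v c, fun x hx => ?_, hc⟩
  rcases eq_or_ne x v with rfl | hxv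
  · rw [update_self]
    exact hcL
  · rw [update_of_ne hxv]
    exact hφL x (mem_erase.2 ⟨hxv, hx⟩)

end SimpleGraph

theorem stmt4_general {V : Type*} [Fintype V] (G : SimpleGraph V)
    [DecidableRel G.Adj] (d : ℕ) (hdeg : Degenerate G d) (L : V → Finset ℕ)
    (hL : ∀ v, (L v).card = G.degree v + d + 1) :
    ∃ φ : V → ℕ, (∀ v, φ v ∈ L v) ∧ IsPCF G φ := by
  classical
  have hL_lt : ∀ v, G.degree v + d < #(L v) := fun v => by rw [hL v]; omega
  obtain ⟨φ, hφL, hφ⟩ := G.exists_isPCFOn_of_degenerate hdeg L hL_lt univ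
  rw [coe_univ] at hφ
  exact ⟨φ, fun v => hφL v (mem_univ v), hφ.isPCF⟩

/-- Every `d`-degenerate graph is proper conflict-free (degree + d + 1)-choosable. -/
theorem stmt4 {V : Type*} [Fintype V] [DecidableEq V] (G : SimpleGraph V)
    [DecidableRel G.Adj] (d : ℕ) (hdeg : Degenerate G d) (L : V → Finset ℕ)
    (hL : ∀ v, (L v).card = G.degree v + d + 1) :
    ∃ φ : V → ℕ, (∀ v, φ v ∈ L v) ∧ IsPCF G φ :=
  stmt4_general G d hdeg L hL
end

section
/- Every tree (in fact, every forest with no isolated vertices) is proper conflict-free (degree + 1)-choosable: for any list assignment L with |L(v)| = d(v) + 1 for every vertex v, there exists a proper conflict-free L-coloring. -/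
open Finset

section Deficit

variable {ι α β : Type*}

-- The subtraction is truncated: an empty `A γ` counts `2`, a singleton `1`, anything larger `0`.
def DeficitLeTwo (A : β → Finset α) : Prop :=
  ∀ T : Finset β, ∑ γ ∈ T, (2 - #(A γ)) ≤ 2

lemma DeficitLeTwo.mono {A B : β → Finset α} (hA : DeficitLeTwo A) (h : ∀ γ, A γ ⊆ B γ) :
    DeficitLeTwo B :=
  fun T => (sum_le_sum fun γ _ => Nat.sub_le_sub_left (card_le_card (h γ)) 2).trans (hA T)

lemma DeficitLeTwo.exists_nonempty {A : β → Finset α} (hA : DeficitLeTwo A) {T : Finset β}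
    (hT : 2 ≤ #T) : ∃ γ ∈ T, (A γ).Nonempty := by
  by_contra! h
  have : ∑ γ ∈ T, (2 - #(A γ)) = 2 * #T := by
    rw [sum_congr rfl fun γ hγ => by rw [h γ hγ, card_empty], sum_const, smul_eq_mul, mul_comm]
  have := hA T
  omega

lemma card_filter_eq_singleton_le [DecidableEq α] (A T : Finset α) :
    #{γ ∈ T | A = {γ}} ≤ 2 - #A := by
  rcases (T.filter (A = {·})).eq_empty_or_nonempty with h | ⟨γ, hγ⟩
  · simp [h]
  have hA : A = {γ} := (mem_filter.1 hγ).2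
  calc #{x ∈ T | A = {x}} ≤ #{γ} := card_le_card fun x hx => by
          rw [mem_filter, hA, singleton_inj] at hx
          simp [hx.2]
    _ = 2 - #A := by simp [hA]

variable {K : Finset ι} {S : ι → β → Finset β} {Λ : Finset β}

def liveColors (K : Finset ι) (S : ι → β → Finset β) (Λ : Finset β) : Finset β :=
  {c ∈ Λ | ∀ i ∈ K, (S i c).Nonempty}

lemma two_mul_card_dead_add_sum_live_le (hS : ∀ i ∈ K, DeficitLeTwo (S i)) :
    2 * #{c ∈ Λ | ¬ ∀ i ∈ K, (S i c).Nonempty} +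
      ∑ c ∈ liveColors K S Λ, ∑ i ∈ K, (2 - #(S i c)) ≤ 2 * #K := by
  have hdead : 2 * #{c ∈ Λ | ¬ ∀ i ∈ K, (S i c).Nonempty} ≤
      ∑ c ∈ Λ with ¬ ∀ i ∈ K, (S i c).Nonempty, ∑ i ∈ K, (2 - #(S i c)) := by
    rw [mul_comm, ← smul_eq_mul, ← sum_const]
    refine sum_le_sum fun c hc => ?_
    obtain ⟨i, hi, hSi⟩ := not_forall₂.1 (mem_filter.1 hc).2
    calc 2 = 2 - #(S i c) := by simp [not_nonempty_iff_eq_empty.1 hSi]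
      _ ≤ ∑ i ∈ K, (2 - #(S i c)) :=
          single_le_sum (f := fun i => 2 - #(S i c)) (fun _ _ => Nat.zero_le _) hi
  calc _ ≤ ∑ c ∈ Λ, ∑ i ∈ K, (2 - #(S i c)) := by
        rw [← sum_filter_add_sum_filter_not Λ fun c => ∀ i ∈ K, (S i c).Nonempty]
        unfold liveColors
        omega
    _ = ∑ i ∈ K, ∑ c ∈ Λ, (2 - #(S i c)) := sum_comm
    _ ≤ ∑ i ∈ K, 2 := sum_le_sum fun i hi => hS i hi Λ
    _ = 2 * #K := by rw [sum_const, smul_eq_mul, mul_comm]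

variable [DecidableEq β]

def admissibleColors (K : Finset ι) (S : ι → β → Finset β) (Λ : Finset β) (γ : β) :
    Finset β :=
  {c ∈ Λ.erase γ | ∀ i ∈ K, ¬ S i c ⊆ {γ}}

lemma mem_admissibleColors {γ c : β} :
    c ∈ admissibleColors K S Λ γ ↔ c ∈ Λ.erase γ ∧ ∀ i ∈ K, ¬ S i c ⊆ {γ} :=
  mem_filter

lemma sum_card_filter_exists_eq_singleton_le (C T : Finset β) :
    ∑ γ ∈ T, #{c ∈ C | ∃ i ∈ K, S i c = {γ}} ≤ ∑ c ∈ C, ∑ i ∈ K, (2 - #(S i c)) := by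
  calc ∑ γ ∈ T, #{c ∈ C | ∃ i ∈ K, S i c = {γ}}
        = ∑ c ∈ C, #{γ ∈ T | ∃ i ∈ K, S i c = {γ}} := by
        simp only [card_filter]
        exact sum_comm
    _ ≤ ∑ c ∈ C, ∑ i ∈ K, #{γ ∈ T | S i c = {γ}} := by
        refine sum_le_sum fun c _ => (card_le_card fun γ hγ => ?_).trans card_biUnion_le
        obtain ⟨hγT, i, hi, hSi⟩ := mem_filter.1 hγ
        exact mem_biUnion.2 ⟨i, hi, mem_filter.2 ⟨hγT, hSi⟩⟩
    _ ≤ ∑ c ∈ C, ∑ i ∈ K, (2 - #(S i c)) :=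
        sum_le_sum fun c _ => sum_le_sum fun i _ => card_filter_eq_singleton_le _ _

lemma card_liveColors_erase_le (γ : β) :
    #((liveColors K S Λ).erase γ) ≤
      #(admissibleColors K S Λ γ) + #{c ∈ liveColors K S Λ | ∃ i ∈ K, S i c = {γ}} := by
  refine (card_le_card fun c hc => ?_).trans (card_union_le _ _)
  obtain ⟨hcγ, hcC⟩ := mem_erase.1 hc
  obtain ⟨hcΛ, hlive⟩ := mem_filter.1 hcC
  by_cases hadm : ∀ i ∈ K, ¬ S i c ⊆ {γ}
  · exact mem_union_left _ (mem_admissibleColors.2 ⟨mem_erase.2 ⟨hcγ, hcΛ⟩, hadm⟩)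
  obtain ⟨i, hi, hsub⟩ := not_forall₂.1 hadm
  rcases subset_singleton_iff.1 (not_not.1 hsub) with h | h
  · exact absurd h (hlive i hi).ne_empty
  · exact mem_union_right _ (mem_filter.2 ⟨hcC, i, hi, h⟩)

theorem deficitLeTwo_admissibleColors (hS : ∀ i ∈ K, DeficitLeTwo (S i)) (hΛ : #Λ = #K + 2) :
    DeficitLeTwo (admissibleColors K S Λ) := by
  intro T
  set B := admissibleColors K S Λ
  set C := liveColors K S Λ
  set F : β → ℕ := fun γ => #{c ∈ C | ∃ i ∈ K, S i c = {γ}}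
  set J := T.filter fun γ => #(B γ) < 2
  have hcard : #C + #{c ∈ Λ | ¬ ∀ i ∈ K, (S i c).Nonempty} = #Λ :=
    card_filter_add_card_filter_not _
  have hF : ∑ γ ∈ J, F γ + 2 * #{c ∈ Λ | ¬ ∀ i ∈ K, (S i c).Nonempty} ≤ 2 * #K :=
    (Nat.add_le_add_right (sum_card_filter_exists_eq_singleton_le C J) _).trans
      ((add_comm _ _).trans_le (two_mul_card_dead_add_sum_live_le hS))
  have hper : ∀ γ ∈ J, (2 - #(B γ)) + #C ≤ 2 + (if γ ∈ C then 1 else 0) + F γ := by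
    intro γ hγ
    have hγB := (mem_filter.1 hγ).2
    have hγC : #(C.erase γ) + (if γ ∈ C then 1 else 0) = #C := by
      split_ifs with h
      · exact card_erase_add_one h
      · rw [erase_eq_of_notMem h, add_zero]
    have : #(C.erase γ) ≤ #(B γ) + F γ := card_liveColors_erase_le γ
    omega
  have hsum := sum_le_sum hper
  simp only [sum_add_distrib, sum_const, smul_eq_mul] at hsum
  have hE : ∑ γ ∈ J, (if γ ∈ C then 1 else 0) ≤ #C := by
    rw [← card_filter]
    exact card_le_card fun γ hγ => (mem_filter.1 hγ).2
  have hE' : ∑ γ ∈ J, (if γ ∈ C then 1 else 0) ≤ #J := by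
    rw [← card_filter]
    exact card_filter_le _ _
  have ha : ∑ γ ∈ J, (2 - #(B γ)) ≤ 2 * #J := by
    calc _ ≤ ∑ γ ∈ J, 2 := sum_le_sum fun _ _ => Nat.sub_le _ _
      _ = 2 * #J := by rw [sum_const, smul_eq_mul, mul_comm]
  rw [← sum_filter_of_ne (p := fun γ => #(B γ) < 2) fun γ _ h => by omega]
  generalize ∑ γ ∈ J, (2 - #(B γ)) = s at *
  generalize ∑ γ ∈ J, F γ = f at *
  generalize ∑ γ ∈ J, (if γ ∈ C then 1 else 0) = e at *
  rcases le_or_gt #J 2 with hj | hj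
  · interval_cases #J <;> omega
  · nlinarith [Nat.mul_le_mul_right (#C - 2) hj]

end Deficit

namespace SimpleGraph

variable {V : Type*} {G : SimpleGraph V} {p u v w x : V}

def branch (G : SimpleGraph V) (p u : V) : Set V := {v | ∃ q : G.Walk u v, p ∉ q.support}

lemma mem_branch_self (h : p ≠ u) : u ∈ G.branch p u := ⟨.nil, by simpa using h⟩

lemma notMem_branch : p ∉ G.branch p u := fun ⟨q, hq⟩ => hq q.end_mem_support

lemma mem_branch_of_adj (hv : v ∈ G.branch p u) (hvw : G.Adj v w) (hw : w ≠ p) :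
    w ∈ G.branch p u := by
  obtain ⟨q, hq⟩ := hv
  exact ⟨q.concat hvw, by simp [Walk.support_concat, hq, hw.symm]⟩

lemma Walk.exists_mem_branch (q : G.Walk u v) (hvu : v ≠ u) :
    ∃ w, G.Adj u w ∧ w ∈ q.support ∧ v ∈ G.branch u w := by
  classical
  have hsub := q.support_toPath_subset_support
  have hq' := q.toPath.2
  generalize (q.toPath : G.Walk u v) = q' at hsub hq'
  cases q' with
  | nil => exact absurd rfl hvu
  | cons h r =>
    rw [Walk.cons_isPath_iff] at hq'
    exact ⟨_, h, hsub (by simp), r, hq'.2⟩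

-- The edge `p u` is a bridge, while the walk `u ⇝ v → p` avoids it unless `v = u`.
lemma IsAcyclic.eq_of_mem_branch (hG : G.IsAcyclic) (hpu : G.Adj p u) (hv : v ∈ G.branch p u)
    (hvp : G.Adj v p) : v = u := by
  obtain ⟨q, hq⟩ := hv
  have := isBridge_iff_forall_walk_mem_edges.1 (isAcyclic_iff_forall_adj_isBridge.1 hG hpu)
    (q.concat hvp).reverse
  simp only [Walk.edges_reverse, List.mem_reverse, Walk.edges_concat, List.concat_eq_append,
    List.mem_append, List.mem_singleton, Sym2.eq_swap (a := v)] at this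
  rcases this with h | h
  · exact absurd (q.fst_mem_support_of_mem_edges h) hq
  · exact (Sym2.congr_right.1 h).symm

lemma exists_mem_branch_of_mem_branch (hv : v ∈ G.branch p u) (hvu : v ≠ u) :
    ∃ w, G.Adj u w ∧ w ≠ p ∧ v ∈ G.branch u w := by
  obtain ⟨q, hq⟩ := hv
  obtain ⟨w, hw, hwq, hvw⟩ := q.exists_mem_branch hvu
  exact ⟨w, hw, fun h => hq (h ▸ hwq), hvw⟩

lemma mem_branch_of_reachable {r s : V} (hr : ∀ w, G.Adj r w → w = s) (h : G.Reachable r v)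
    (hv : v ≠ r) : v ∈ G.branch r s := by
  obtain ⟨q⟩ := h
  obtain ⟨w, hw, -, hvw⟩ := q.exists_mem_branch hv
  exact hr w hw ▸ hvw

lemma IsAcyclic.disjoint_branch {w₁ w₂ : V} (hG : G.IsAcyclic) (h₁ : G.Adj u w₁)
    (h₂ : G.Adj u w₂) (hne : w₁ ≠ w₂) : Disjoint (G.branch u w₁) (G.branch u w₂) := by
  refine Set.disjoint_left.2 fun v ⟨q₁, hq₁⟩ ⟨q₂, hq₂⟩ => hne ?_
  have : w₂ ∈ G.branch u w₁ :=
    ⟨q₁.append q₂.reverse, by simp [Walk.mem_support_append_iff, hq₁, hq₂]⟩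
  exact (hG.eq_of_mem_branch h₁ this h₂.symm).symm

lemma IsAcyclic.branch_ssubset (hG : G.IsAcyclic) (hpu : G.Adj p u) (huw : G.Adj u w)
    (hwp : w ≠ p) : G.branch u w ⊂ G.branch p u := by
  classical
  refine ⟨fun v ⟨q, hq⟩ => ⟨q.cons huw, ?_⟩,
    fun h => notMem_branch (h (mem_branch_self hpu.ne))⟩
  simp only [Walk.support_cons, List.mem_cons, not_or]
  refine ⟨hpu.ne, fun hp => hwp ?_⟩
  have : p ∈ G.branch u w :=
    ⟨q.takeUntil p hp, fun h => hq (q.support_takeUntil_subset_support hp h)⟩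
  exact (hG.eq_of_mem_branch huw this hpu).symm

lemma IsAcyclic.exists_reachable_leaf [Finite V] (hG : G.IsAcyclic) (hpu : G.Adj p u) :
    ∃ r s, G.Reachable u r ∧ G.Adj r s ∧ ∀ w, G.Adj r w → w = s := by
  induction h : (G.branch p u).ncard using Nat.strong_induction_on generalizing p u with
  | _ n ih =>
  by_cases hleaf : ∀ w, G.Adj u w → w = p
  · exact ⟨u, p, .rfl, hpu.symm, hleaf⟩
  obtain ⟨w, huw, hwp⟩ := not_forall₂.1 hleaf
  obtain ⟨r, s, hwr, hrs, hr⟩ :=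
    ih _ (h ▸ Set.ncard_lt_ncard (hG.branch_ssubset hpu huw hwp)) huw rfl
  exact ⟨r, s, huw.reachable.trans hwr, hrs, hr⟩

variable {β : Type*} {L : V → Finset β}

def IsPCFAt (G : SimpleGraph V) (L : V → Finset β) (φ : V → β) (v : V) : Prop :=
  φ v ∈ L v ∧ (∀ w, G.Adj v w → φ v ≠ φ w) ∧ ∃ c, ∃! w, G.Adj v w ∧ φ w = c

lemma IsPCFAt.congr {φ ψ : V → β} (h : IsPCFAt G L φ v) (hv : φ v = ψ v)
    (hadj : ∀ w, G.Adj v w → φ w = ψ w) : IsPCFAt G L ψ v := by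
  obtain ⟨hL, hprop, c, w, ⟨hvw, hw⟩, huniq⟩ := h
  refine ⟨hv ▸ hL, fun x hx => hv ▸ hadj x hx ▸ hprop x hx, c, w, ⟨hvw, hadj w hvw ▸ hw⟩,
    fun x ⟨hx, hxc⟩ => huniq x ⟨hx, hadj x hx ▸ hxc⟩⟩

open Classical in
noncomputable def branchColors (G : SimpleGraph V) (L : V → Finset β) (p u : V) (γ : β) :
    Finset β :=
  {c ∈ L u | ∃ φ : V → β, φ p = γ ∧ φ u = c ∧ ∀ v ∈ G.branch p u, IsPCFAt G L φ v}

lemma mem_branchColors {c γ : β} : c ∈ G.branchColors L p u γ ↔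
    c ∈ L u ∧ ∃ φ : V → β, φ p = γ ∧ φ u = c ∧ ∀ v ∈ G.branch p u, IsPCFAt G L φ v := by
  classical exact Finset.mem_filter

lemma IsAcyclic.exists_eqOn_branch (hG : G.IsAcyclic) (hpu : G.Adj p u) (γ c : β)
    (ψ : V → V → β) : ∃ φ : V → β, φ p = γ ∧ φ u = c ∧
      ∀ w, G.Adj u w → w ≠ p → ∀ v ∈ G.branch u w, φ v = ψ w v := by
  classical
  let owner : V → V := fun v =>
    if h : ∃ w, G.Adj u w ∧ w ≠ p ∧ v ∈ G.branch u w then h.choose else u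
  refine ⟨fun v => if v = p then γ else if v = u then c else ψ (owner v) v, if_pos rfl,
    by simp [hpu.ne'], fun w huw hwp v hv => ?_⟩
  have hvp : v ≠ p := by
    rintro rfl
    exact hwp (hG.eq_of_mem_branch huw hv hpu).symm
  have hvu : v ≠ u := fun h => notMem_branch (h ▸ hv)
  have hex : ∃ w, G.Adj u w ∧ w ≠ p ∧ v ∈ G.branch u w := ⟨w, huw, hwp, hv⟩
  have howner : owner v = w := by
    simp only [owner, dif_pos hex]
    obtain ⟨huw', -, hv'⟩ := hex.choose_spec
    by_contra hne
    exact Set.disjoint_left.1 (hG.disjoint_branch huw' huw hne) hv' hv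
  simp [hvp, hvu, howner]

theorem IsAcyclic.mem_branchColors_of_forall {c γ : β} (hG : G.IsAcyclic) (hpu : G.Adj p u)
    (hc : c ∈ L u) (hcγ : c ≠ γ)
    (h : ∀ w, G.Adj u w → w ≠ p → ∃ t ∈ G.branchColors L u w c, t ≠ γ) :
    c ∈ G.branchColors L p u γ := by
  have hψ : ∀ w, ∃ ψ : V → β, G.Adj u w → w ≠ p →
      ψ u = c ∧ ψ w ≠ γ ∧ ∀ v ∈ G.branch u w, IsPCFAt G L ψ v := by
    intro w
    by_cases hw : G.Adj u w ∧ w ≠ p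
    · obtain ⟨t, ht, htγ⟩ := h w hw.1 hw.2
      obtain ⟨-, ψ, hψu, hψw, hψ⟩ := mem_branchColors.1 ht
      exact ⟨ψ, fun _ _ => ⟨hψu, hψw ▸ htγ, hψ⟩⟩
    · exact ⟨fun _ => c, fun h₁ h₂ => absurd ⟨h₁, h₂⟩ hw⟩
  choose ψ hψ using hψ
  obtain ⟨φ, hφp, hφu, hφ⟩ := hG.exists_eqOn_branch hpu γ c ψ
  have hagree : ∀ w, G.Adj u w → w ≠ p → ∀ v, v = u ∨ v ∈ G.branch u w → φ v = ψ w v := by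
    rintro w huw hwp v (rfl | hv)
    exacts [hφu.trans (hψ w huw hwp).1.symm, hφ w huw hwp v hv]
  have hchild : ∀ w, G.Adj u w → w ≠ p → φ w ≠ γ ∧ φ w ≠ c := by
    intro w huw hwp
    obtain ⟨hψu, hψw, hψ⟩ := hψ w huw hwp
    rw [hφ w huw hwp w (mem_branch_self huw.ne)]
    exact ⟨hψw, hψu ▸ (hψ w (mem_branch_self huw.ne)).2.1 u huw.symm⟩
  refine mem_branchColors.2 ⟨hc, φ, hφp, hφu, fun v hv => ?_⟩
  by_cases hvu : v = u
  · subst hvu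
    refine ⟨hφu ▸ hc, fun x hx => ?_, γ, p, ⟨hpu.symm, hφp⟩, fun x ⟨hx, hxγ⟩ => ?_⟩
    · by_cases hxp : x = p
      · rwa [hφu, hxp, hφp]
      · exact hφu ▸ (hchild x hx hxp).2.symm
    · by_contra hxp
      exact (hchild x hx hxp).1 hxγ
  · obtain ⟨w, huw, hwp, hvw⟩ := exists_mem_branch_of_mem_branch hv hvu
    refine ((hψ w huw hwp).2.2 v hvw).congr (hagree w huw hwp v (Or.inr hvw)).symm
      fun x hx => (hagree w huw hwp x ?_).symm
    by_cases hxu : x = u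
    · exact Or.inl hxu
    · exact Or.inr (mem_branch_of_adj hvw hx hxu)

theorem IsAcyclic.deficitLeTwo_branchColors [Fintype V] [DecidableRel G.Adj] (hG : G.IsAcyclic)
    (hL : ∀ v, #(L v) = G.degree v + 1) (hpu : G.Adj p u) :
    DeficitLeTwo (G.branchColors L p u) := by
  classical
  induction h : (G.branch p u).ncard using Nat.strong_induction_on generalizing p u with
  | _ n ih =>
  have hp : p ∈ G.neighborFinset u := (G.mem_neighborFinset u p).2 hpu.symm
  have hK : #(L u) = #((G.neighborFinset u).erase p) + 2 := by
    rw [hL, card_erase_of_mem hp, card_neighborFinset_eq_degree]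
    have := card_pos.2 ⟨p, hp⟩
    rw [card_neighborFinset_eq_degree] at this
    omega
  refine (deficitLeTwo_admissibleColors (S := G.branchColors L u) (fun w hw => ?_) hK).mono
    fun γ c hc => ?_
  · obtain ⟨hwp, huw⟩ := mem_erase.1 hw
    rw [mem_neighborFinset] at huw
    exact ih _ (h ▸ Set.ncard_lt_ncard (hG.branch_ssubset hpu huw hwp)) huw rfl
  · obtain ⟨hc, hadm⟩ := mem_admissibleColors.1 hc
    obtain ⟨hcγ, hcL⟩ := mem_erase.1 hc
    refine hG.mem_branchColors_of_forall hpu hcL hcγ fun w huw hwp => ?_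
    obtain ⟨t, ht, htγ⟩ :=
      not_subset.1 (hadm w (mem_erase.2 ⟨hwp, (G.mem_neighborFinset u w).2 huw⟩))
    exact ⟨t, ht, by simpa using htγ⟩

theorem IsAcyclic.exists_forall_reachable_isPCFAt [Fintype V] [DecidableRel G.Adj]
    (hG : G.IsAcyclic) (hL : ∀ v, #(L v) = G.degree v + 1) (hvx : G.Adj v x) :
    ∃ φ : V → β, ∀ w, G.Reachable v w → G.IsPCFAt L φ w := by
  obtain ⟨r, s, hvr, hrs, hr⟩ := hG.exists_reachable_leaf hvx.symm
  have hdeg : G.degree r = 1 := degree_eq_one_iff_existsUnique_adj.2 ⟨s, hrs, hr⟩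
  obtain ⟨γ, hγ, c, hc⟩ :=
    (hG.deficitLeTwo_branchColors hL hrs).exists_nonempty (T := L r) (by rw [hL, hdeg])
  obtain ⟨-, φ, hφr, -, hφ⟩ := mem_branchColors.1 hc
  refine ⟨φ, fun w hw => ?_⟩
  by_cases hwr : w = r
  · subst hwr
    have hsw := (hφ s (mem_branch_self hrs.ne)).2.1 w hrs.symm
    exact ⟨hφr ▸ hγ, fun y hy => hr y hy ▸ hsw.symm, φ s, s, ⟨hrs, rfl⟩, fun y hy => hr y hy.1⟩
  · exact hφ w (mem_branch_of_reachable hr (hvr.symm.trans hw) hwr)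

theorem exists_forall_isPCFAt_of_forall_reachable (h : ∀ v, ∃ φ : V → β, ∀ w, G.Reachable v w → G.IsPCFAt L φ w) :
    ∃ φ : V → β, ∀ v, G.IsPCFAt L φ v := by
  choose Φ hΦ using h
  let rep : V → V := fun v => (G.connectedComponentMk v).out
  have hrep : ∀ v, G.Reachable (rep v) v := fun v =>
    ConnectedComponent.exact (G.connectedComponentMk v).out_eq
  refine ⟨fun v => Φ (rep v) v, fun v => (hΦ (rep v) v (hrep v)).congr rfl fun w hvw => ?_⟩
  simp only [rep, ConnectedComponent.connectedComponentMk_eq_of_adj hvw]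

end SimpleGraph

/-- Every forest with no isolated vertices (in particular every tree) is proper
conflict-free (degree + 1)-choosable. -/
theorem stmt5 {V : Type*} [Fintype V] (G : SimpleGraph V) [DecidableRel G.Adj]
    (hforest : G.IsAcyclic) (hnoiso : ∀ v : V, ∃ u, G.Adj v u)
    (L : V → Finset ℕ) (hL : ∀ v, (L v).card = G.degree v + 1) :
    ∃ φ : V → ℕ, (∀ v, φ v ∈ L v) ∧ IsPCF G φ := by
  obtain ⟨φ, hφ⟩ := G.exists_forall_isPCFAt_of_forall_reachable fun v =>
    hforest.exists_forall_reachable_isPCFAt hL (hnoiso v).choose_spec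
  exact ⟨φ, fun v => (hφ v).1, fun a b hab => (hφ a).2.1 b hab, fun v _ => (hφ v).2.2⟩
end

section
/- Let G be a graph containing a path u–v–w where u, v, w all have degree 2, with u adjacent to a vertex x and w adjacent to a vertex y (x, y ∉ {u,v,w}). Let L be a list assignment with |L(z)| = d(z) + 2 for every vertex z, and let φ be a proper conflict-free L-coloring of G − {u,v,w}. If x = y, or if some vertex among x, y has at least two colors each appearing exactly once in its neighborhood in G − {u,v,w}, or if the lists L(u), L(v), L(w) do not all have size 4 with the specific structure L(u) = {φ(x), α, ξ₁, ξ₂}, L(v) = {φ(x), φ(y), ξ₁, ξ₂}, L(w) = {φ(y), β, ξ₁, ξ₂} where {α} and {β} are the unique once-appearing colors in the neighborhoods of x and y respectively, then φ extends to a proper conflict-free L-coloring of G. -/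
/-- A proper conflict-free coloring from the lists `L`. -/
def IsPCFList {V : Type*} (G : SimpleGraph V) (L : V → Finset ℕ) (φ : V → ℕ) : Prop :=
  (∀ v, φ v ∈ L v) ∧ IsPCF G φ

/-- The graph obtained from `G` by deleting the vertices in `S`
(kept on the same vertex type; deleted vertices become isolated). -/
def delVerts {V : Type*} (G : SimpleGraph V) (S : Set V) : SimpleGraph V where
  Adj a b := G.Adj a b ∧ a ∉ S ∧ b ∉ S
  symm := by
    constructor
    intro a b h
    exact ⟨h.1.symm, h.2.2, h.2.1⟩
  loopless := by
    constructor
    intro a h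
    exact G.loopless.irrefl a h.1

/-- `Uset G φ v` is the set of colors appearing exactly once in the open
neighborhood of `v` in `G` under the coloring `φ`. -/
def Uset {V : Type*} (G : SimpleGraph V) (φ : V → ℕ) (v : V) : Set ℕ :=
  {c | ∃! u : V, G.Adj v u ∧ φ u = c}

/-!
Colour `u, v, w` by `a, b, c`. The result is a proper colouring that is conflict-free at
`u, v, w` as soon as `a, b, c` are pairwise distinct, `a ≠ φ x`, `b ∉ {φ x, φ y}` and
`c ≠ φ y`. At `x` some colour stays unique once `a` avoids a single guard colour `g`: the
element of `U(x)` if `U(x)` is a singleton (if `U(x)` is empty, `a` itself is unique; if it has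
two colours, one survives), and any element of `U(x)` when `x = y`, which `c` must then avoid
too. Likewise at `y` with a guard `h`. So it suffices to pick pairwise distinct
`a ∈ L u \ {φ x, g}`, `b ∈ L v \ {φ x, φ y}`, `c ∈ L w \ {φ y, h}` from lists of four colours,
and this fails only if all three sets equal the same pair `{ξ₁, ξ₂}`: that is the excluded
configuration, and it cannot occur when `x = y`, since then `L v \ {φ x}` has three colours.
-/

namespace Finset

variable {α : Type*} [DecidableEq α]

lemma two_le_card_sdiff_pair {s : Finset α} (hs : s.card = 4) (p q : α) :
    2 ≤ (s \ {p, q}).card := by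
  have := le_card_sdiff {p, q} s
  have := card_le_two (a := p) (b := q)
  omega

lemma eq_insert_insert_of_sdiff_pair_eq {s : Finset α} {p q ξ₁ ξ₂ : α} (hs : s.card = 4)
    (h : s \ {p, q} = {ξ₁, ξ₂}) : s = {p, q, ξ₁, ξ₂} := by
  refine eq_of_subset_of_card_le (fun z hz => ?_) (hs ▸ card_le_four)
  by_cases hpq : z ∈ ({p, q} : Finset α)
  · simp only [mem_insert, mem_singleton] at hpq ⊢
    tauto
  · have : z ∈ ({ξ₁, ξ₂} : Finset α) := h ▸ mem_sdiff.2 ⟨hz, hpq⟩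
    simp only [mem_insert, mem_singleton] at this ⊢
    tauto

lemma eq_pair_of_subset_pair {s : Finset α} {a b : α} (hs : 2 ≤ s.card)
    (h : ∀ z ∈ s, z = a ∨ z = b) : s = {a, b} :=
  eq_of_subset_of_card_le (fun z hz => by simpa using h z hz) (card_le_two.trans hs)

lemma ne_insert_insert_self_of_card_eq_four {s : Finset α} (hs : s.card = 4) (p ξ₁ ξ₂ : α) :
    s ≠ {p, p, ξ₁, ξ₂} := by
  rintro rfl
  rw [insert_idem] at hs
  exact absurd (hs ▸ card_le_three) (by decide)

lemma exists_distinct_triple_or_eq {A B C : Finset α} (hA : A.card = 4) (hB : B.card = 4)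
    (hC : C.card = 4) (p q g h : α) :
    (∃ a ∈ A \ {p, g}, ∃ b ∈ B \ {p, q}, ∃ c ∈ C \ {q, h}, a ≠ b ∧ b ≠ c ∧ a ≠ c) ∨
      ∃ ξ₁ ξ₂, A = {p, g, ξ₁, ξ₂} ∧ B = {p, q, ξ₁, ξ₂} ∧ C = {q, h, ξ₁, ξ₂} := by
  refine or_iff_not_imp_left.2 fun hno => ?_
  push Not at hno
  have forced : ∀ a ∈ A \ {p, g}, ∀ b ∈ B \ {p, q}, a ≠ b → C \ {q, h} = {a, b} :=
    fun a ha b hb hab => eq_pair_of_subset_pair (two_le_card_sdiff_pair hC q h)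
      fun c hc => (eq_or_ne c b).symm.imp_left
        fun hcb => (hno a ha b hb c hc hab (Ne.symm hcb)).symm
  obtain ⟨b₁, hb₁, b₂, hb₂, hb₁₂⟩ := one_lt_card.1 (two_le_card_sdiff_pair hB p q)
  obtain ⟨a₁, ha₁, ha₁b₁⟩ := exists_mem_ne (two_le_card_sdiff_pair hA p g) b₁
  obtain ⟨a₂, ha₂, ha₂b₂⟩ := exists_mem_ne (two_le_card_sdiff_pair hA p g) b₂
  have hC₁ := forced a₁ ha₁ b₁ hb₁ ha₁b₁
  have hC₂ := forced a₂ ha₂ b₂ hb₂ ha₂b₂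
  have hb₂a₁ : b₂ = a₁ := by
    have : b₂ ∈ C \ {q, h} := hC₂ ▸ by simp
    simpa [hC₁, hb₁₂.symm] using this
  have hb₁a₂ : b₁ = a₂ := by
    have : b₁ ∈ C \ {q, h} := hC₁ ▸ by simp
    simpa [hC₂, hb₁₂] using this
  subst hb₂a₁ hb₁a₂
  have hA' : A \ {p, g} = {b₁, b₂} := eq_pair_of_subset_pair (two_le_card_sdiff_pair hA p g)
    fun a ha => by
      rcases eq_or_ne a b₁ with rfl | hab₁
      · exact Or.inl rfl
      · have : a ∈ C \ {q, h} := forced a ha b₁ hb₁ hab₁ ▸ by simp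
        simpa [hC₁, or_comm] using this
  have hB' : B \ {p, q} = {b₁, b₂} := eq_pair_of_subset_pair (two_le_card_sdiff_pair hB p q)
    fun b hb => by
      rcases eq_or_ne b₁ b with rfl | hb₁b
      · exact Or.inl rfl
      · have : b ∈ C \ {q, h} := forced b₁ ha₂ b hb hb₁b ▸ by simp
        simpa [hC₁, or_comm] using this
  exact ⟨b₁, b₂, eq_insert_insert_of_sdiff_pair_eq hA hA', eq_insert_insert_of_sdiff_pair_eq hB hB',
    eq_insert_insert_of_sdiff_pair_eq hC (hC₁.trans (pair_comm _ _))⟩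

end Finset

lemma Set.exists_eq_singleton_or_eq {α : Type*} (s : Set α) (d : α) :
    ∃ g, s = {g} ∨ (¬∃ a, s = {a}) ∧ g = d := by
  by_cases h : ∃ a, s = {a}
  · obtain ⟨a, rfl⟩ := h
    exact ⟨a, Or.inl rfl⟩
  · exact ⟨d, Or.inr ⟨h, rfl⟩⟩

section Uset

variable {V : Type*} {G : SimpleGraph V} {S : Set V} {φ ψ : V → ℕ} {z : V}

lemma mem_Uset_of_adj_iff_or {p q : V} (hadj : ∀ t, G.Adj z t ↔ t = p ∨ t = q)
    (hpq : ψ p ≠ ψ q) : ψ p ∈ Uset G ψ z := by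
  refine ⟨p, ⟨(hadj p).2 (Or.inl rfl), rfl⟩, fun t ⟨ht, hψt⟩ => ?_⟩
  rcases (hadj t).1 ht with rfl | rfl
  · rfl
  · exact absurd hψt.symm hpq

lemma mem_Uset_of_mem_Uset_delVerts (hz : z ∉ S) (hψ : ∀ t ∉ S, ψ t = φ t) {α : ℕ}
    (hα : α ∈ Uset (delVerts G S) φ z) (hS : ∀ t ∈ S, G.Adj z t → ψ t ≠ α) :
    α ∈ Uset G ψ z := by
  obtain ⟨t₀, ⟨ht₀, hφt₀⟩, huniq⟩ := hα
  refine ⟨t₀, ⟨ht₀.1, (hψ t₀ ht₀.2.2).trans hφt₀⟩, fun t ⟨ht, hψt⟩ => ?_⟩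
  by_cases htS : t ∈ S
  · exact absurd hψt (hS t htS ht)
  · exact huniq t ⟨⟨ht, hz, htS⟩, (hψ t htS).symm.trans hψt⟩

lemma mem_Uset_of_existsUnique_mem_deleted (hz : z ∉ S) (hψ : ∀ t ∉ S, ψ t = φ t) {c : ℕ}
    (hc : ∀ t, (delVerts G S).Adj z t → φ t ≠ c) (hS : ∃! t, t ∈ S ∧ G.Adj z t ∧ ψ t = c) :
    c ∈ Uset G ψ z := by
  obtain ⟨s, ⟨-, hzs, hψs⟩, huniq⟩ := hS
  refine ⟨s, ⟨hzs, hψs⟩, fun t ⟨ht, hψt⟩ => ?_⟩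
  by_cases htS : t ∈ S
  · exact huniq t ⟨htS, ht, hψt⟩
  · exact absurd ((hψ t htS).symm.trans hψt) (hc t ⟨ht, hz, htS⟩)

lemma IsPCF.not_adj_of_Uset_eq_empty {H : SimpleGraph V} (hφ : IsPCF H φ)
    (h : Uset H φ z = ∅) (t : V) : ¬H.Adj z t := fun ht =>
  (Set.nonempty_iff_ne_empty.1 (hφ.2 z ⟨t, ht⟩)) h

lemma Uset_nonempty_of_adj_deleted_iff_eq (hz : z ∉ S) (hψ : ∀ t ∉ S, ψ t = φ t)
    (hφ : IsPCF (delVerts G S) φ) {s : V} (hs : s ∈ S) (hS : ∀ t ∈ S, G.Adj z t ↔ t = s)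
    {g : ℕ} (hg : Uset (delVerts G S) φ z = {g} ∨ ¬∃ α, Uset (delVerts G S) φ z = {α})
    (hsg : ψ s ≠ g) : (Uset G ψ z).Nonempty := by
  have keep : ∀ α ∈ Uset (delVerts G S) φ z, ψ s ≠ α → α ∈ Uset G ψ z := fun α hα hsα =>
    mem_Uset_of_mem_Uset_delVerts hz hψ hα fun t ht hzt => (hS t ht).1 hzt ▸ hsα
  rcases hg with hU | hU
  · exact ⟨g, keep g (hU ▸ rfl) hsg⟩
  rcases (Uset (delVerts G S) φ z).eq_empty_or_nonempty with hE | ⟨α, hα⟩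
  · exact ⟨ψ s, mem_Uset_of_existsUnique_mem_deleted hz hψ
      (fun t ht => absurd ht (hφ.not_adj_of_Uset_eq_empty hE t))
      ⟨s, ⟨hs, (hS s hs).2 rfl, rfl⟩, fun t ht => (hS t ht.1).1 ht.2.1⟩⟩
  · obtain ⟨β, hβ, hβα⟩ : ∃ β ∈ Uset (delVerts G S) φ z, β ≠ α := by
      by_contra! h
      exact hU ⟨α, Set.eq_singleton_iff_unique_mem.2 ⟨hα, h⟩⟩
    rcases eq_or_ne (ψ s) α with hsα | hsα
    · exact ⟨β, keep β hβ (hsα ▸ hβα.symm)⟩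
    · exact ⟨α, keep α hα hsα⟩

lemma Uset_nonempty_of_adj_deleted_iff_eq_or_eq (hz : z ∉ S) (hψ : ∀ t ∉ S, ψ t = φ t)
    (hφ : IsPCF (delVerts G S) φ) {s s' : V} (hs : s ∈ S)
    (hS : ∀ t ∈ S, G.Adj z t ↔ t = s ∨ t = s') (hss' : ψ s ≠ ψ s') {g : ℕ}
    (hg : (Uset (delVerts G S) φ z).Nonempty → g ∈ Uset (delVerts G S) φ z)
    (hsg : ψ s ≠ g) (hs'g : ψ s' ≠ g) : (Uset G ψ z).Nonempty := by
  rcases (Uset (delVerts G S) φ z).eq_empty_or_nonempty with hE | hU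
  · refine ⟨ψ s, mem_Uset_of_existsUnique_mem_deleted hz hψ
      (fun t ht => absurd ht (hφ.not_adj_of_Uset_eq_empty hE t))
      ⟨s, ⟨hs, (hS s hs).2 (Or.inl rfl), rfl⟩, fun t ⟨ht, hzt, hψt⟩ => ?_⟩⟩
    rcases (hS t ht).1 hzt with rfl | rfl
    · rfl
    · exact absurd hψt.symm hss'
  · refine ⟨g, mem_Uset_of_mem_Uset_delVerts hz hψ (hg hU) fun t ht hzt => ?_⟩
    rcases (hS t ht).1 hzt with rfl | rfl
    exacts [hsg, hs'g]

end Uset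

lemma SimpleGraph.adj_iff_of_degree_eq_two {V : Type*} [Fintype V] {G : SimpleGraph V}
    [DecidableRel G.Adj] {u v x : V} (hu : G.degree u = 2) (huv : G.Adj u v)
    (hux : G.Adj u x) (hvx : v ≠ x) (z : V) : G.Adj u z ↔ z = v ∨ z = x := by
  classical
  have hN : G.neighborFinset u = {v, x} :=
    (Finset.eq_of_subset_of_card_le (by simp [Finset.insert_subset_iff, huv, hux])
      (by rw [G.card_neighborFinset_eq_degree, hu, Finset.card_pair hvx])).symm
  rw [← G.mem_neighborFinset, hN]
  simp

section Extend

variable {V : Type*} [DecidableEq V] {φ : V → ℕ} {u v w z : V} {a b c : ℕ}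

def extendPath (φ : V → ℕ) (u v w : V) (a b c : ℕ) : V → ℕ :=
  Function.update (Function.update (Function.update φ w c) v b) u a

lemma extendPath_apply_left : extendPath φ u v w a b c u = a :=
  Function.update_self ..

lemma extendPath_apply_mid (huv : u ≠ v) : extendPath φ u v w a b c v = b := by
  simp [extendPath, huv.symm]

lemma extendPath_apply_right (huw : u ≠ w) (hvw : v ≠ w) : extendPath φ u v w a b c w = c := by
  simp [extendPath, huw.symm, hvw.symm]

lemma extendPath_apply_of_notMem (hz : z ∉ ({u, v, w} : Set V)) :
    extendPath φ u v w a b c z = φ z := by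
  simp only [Set.mem_insert_iff, Set.mem_singleton_iff, not_or] at hz
  simp [extendPath, hz.1, hz.2.1, hz.2.2]

end Extend

structure IsDegTwoPath {V : Type*} (G : SimpleGraph V) (u v w x y : V) : Prop where
  adj_u : ∀ z, G.Adj u z ↔ z = v ∨ z = x
  adj_v : ∀ z, G.Adj v z ↔ z = u ∨ z = w
  adj_w : ∀ z, G.Adj w z ↔ z = v ∨ z = y
  u_ne_w : u ≠ w
  x_notMem : x ∉ ({u, v, w} : Set V)
  y_notMem : y ∉ ({u, v, w} : Set V)

namespace IsDegTwoPath

variable {V : Type*} {G : SimpleGraph V} {u v w x y : V}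

lemma u_ne_v (P : IsDegTwoPath G u v w x y) : u ≠ v :=
  G.ne_of_adj ((P.adj_u v).2 (Or.inl rfl))

lemma v_ne_w (P : IsDegTwoPath G u v w x y) : v ≠ w :=
  G.ne_of_adj ((P.adj_v w).2 (Or.inr rfl))

lemma adj_iff_of_mem (P : IsDegTwoPath G u v w x y) {z t : V}
    (hz : z ∉ ({u, v, w} : Set V)) (ht : t ∈ ({u, v, w} : Set V)) :
    G.Adj z t ↔ t = u ∧ z = x ∨ t = w ∧ z = y := by
  simp only [Set.mem_insert_iff, Set.mem_singleton_iff, not_or] at hz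
  rcases ht with rfl | rfl | rfl
  · rw [G.adj_comm, P.adj_u]
    simp [hz.2.1, P.u_ne_w]
  · rw [G.adj_comm, P.adj_v]
    simp [hz.1, hz.2.2, P.u_ne_v.symm, P.v_ne_w]
  · rw [G.adj_comm, P.adj_w]
    simp [hz.2.1, P.u_ne_w.symm]

section Extension

variable [DecidableEq V] {L : V → Finset ℕ} {φ : V → ℕ} {a b c : ℕ}

lemma extendPath_ne_of_adj (P : IsDegTwoPath G u v w x y) (hab : a ≠ b) (hbc : b ≠ c)
    (hax : a ≠ φ x) (hcy : c ≠ φ y) {p q : V} (hp : p ∈ ({u, v, w} : Set V)) (hpq : G.Adj p q) :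
    extendPath φ u v w a b c p ≠ extendPath φ u v w a b c q := by
  have hψv : extendPath φ u v w a b c v = b := extendPath_apply_mid P.u_ne_v
  have hψw : extendPath φ u v w a b c w = c := extendPath_apply_right P.u_ne_w P.v_ne_w
  rcases hp with rfl | rfl | rfl
  · rcases (P.adj_u q).1 hpq with rfl | rfl
    · rwa [extendPath_apply_left, hψv]
    · rwa [extendPath_apply_left, extendPath_apply_of_notMem P.x_notMem]
  · rcases (P.adj_v q).1 hpq with rfl | rfl
    · rw [hψv, extendPath_apply_left]; exact hab.symm
    · rwa [hψv, hψw]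
  · rcases (P.adj_w q).1 hpq with rfl | rfl
    · rw [hψw, hψv]; exact hbc.symm
    · rwa [hψw, extendPath_apply_of_notMem P.y_notMem]

theorem isPCFList_extendPath (P : IsDegTwoPath G u v w x y)
    (hφ : IsPCF (delVerts G {u, v, w}) φ) (hφL : ∀ z, z ∉ ({u, v, w} : Set V) → φ z ∈ L z)
    (ha : a ∈ L u) (hb : b ∈ L v) (hc : c ∈ L w) (hab : a ≠ b) (hbc : b ≠ c) (hac : a ≠ c)
    (hax : a ≠ φ x) (hbx : b ≠ φ x) (hby : b ≠ φ y) (hcy : c ≠ φ y)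
    (hx : (Uset G (extendPath φ u v w a b c) x).Nonempty)
    (hy : (Uset G (extendPath φ u v w a b c) y).Nonempty) :
    IsPCFList G L (extendPath φ u v w a b c) := by
  set ψ := extendPath φ u v w a b c
  have hψu : ψ u = a := extendPath_apply_left
  have hψv : ψ v = b := extendPath_apply_mid P.u_ne_v
  have hψw : ψ w = c := extendPath_apply_right P.u_ne_w P.v_ne_w
  have hψ : ∀ z ∉ ({u, v, w} : Set V), ψ z = φ z := fun z hz => extendPath_apply_of_notMem hz
  have hψx : ψ x = φ x := hψ x P.x_notMem
  have hψy : ψ y = φ y := hψ y P.y_notMem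
  refine ⟨fun z => ?_, fun p q hpq => ?_, fun z ⟨t, hzt⟩ => ?_⟩
  · by_cases hz : z ∈ ({u, v, w} : Set V)
    · rcases hz with rfl | rfl | rfl
      exacts [hψu ▸ ha, hψv ▸ hb, hψw ▸ hc]
    · exact hψ z hz ▸ hφL z hz
  · by_cases hp : p ∈ ({u, v, w} : Set V)
    · exact P.extendPath_ne_of_adj hab hbc hax hcy hp hpq
    by_cases hq : q ∈ ({u, v, w} : Set V)
    · exact (P.extendPath_ne_of_adj hab hbc hax hcy hq hpq.symm).symm
    rw [hψ p hp, hψ q hq]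
    exact hφ.1 ⟨hpq, hp, hq⟩
  · by_cases hz : z ∈ ({u, v, w} : Set V)
    · rcases hz with rfl | rfl | rfl
      · exact ⟨_, mem_Uset_of_adj_iff_or P.adj_u (by rwa [hψv, hψx])⟩
      · exact ⟨_, mem_Uset_of_adj_iff_or P.adj_v (by rwa [hψu, hψw])⟩
      · exact ⟨_, mem_Uset_of_adj_iff_or P.adj_w (by rwa [hψv, hψy])⟩
    rcases eq_or_ne z x with rfl | hzx
    · exact hx
    rcases eq_or_ne z y with rfl | hzy
    · exact hy
    have hS : ∀ t ∈ ({u, v, w} : Set V), ¬G.Adj z t := fun t ht hzt => by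
      rcases (P.adj_iff_of_mem hz ht).1 hzt with ⟨-, rfl⟩ | ⟨-, rfl⟩
      exacts [hzx rfl, hzy rfl]
    have htS : t ∉ ({u, v, w} : Set V) := fun ht => hS t ht hzt
    obtain ⟨α, hα⟩ := hφ.2 z ⟨t, hzt, hz, htS⟩
    exact ⟨α, mem_Uset_of_mem_Uset_delVerts hz hψ hα fun t ht hzt => absurd hzt (hS t ht)⟩

lemma Uset_extendPath_nonempty_left (P : IsDegTwoPath G u v w x y) (hxy : x ≠ y)
    (hφ : IsPCF (delVerts G {u, v, w}) φ) {g : ℕ}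
    (hg : Uset (delVerts G {u, v, w}) φ x = {g} ∨ ¬∃ α, Uset (delVerts G {u, v, w}) φ x = {α})
    (hag : a ≠ g) : (Uset G (extendPath φ u v w a b c) x).Nonempty :=
  Uset_nonempty_of_adj_deleted_iff_eq P.x_notMem (fun _ => extendPath_apply_of_notMem) hφ
    (Set.mem_insert u _) (fun t ht => by simp [P.adj_iff_of_mem P.x_notMem ht, hxy]) hg
    (by rwa [extendPath_apply_left])

lemma Uset_extendPath_nonempty_right (P : IsDegTwoPath G u v w x y) (hxy : x ≠ y)
    (hφ : IsPCF (delVerts G {u, v, w}) φ) {h : ℕ}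
    (hh : Uset (delVerts G {u, v, w}) φ y = {h} ∨ ¬∃ β, Uset (delVerts G {u, v, w}) φ y = {β})
    (hch : c ≠ h) : (Uset G (extendPath φ u v w a b c) y).Nonempty :=
  Uset_nonempty_of_adj_deleted_iff_eq P.y_notMem (fun _ => extendPath_apply_of_notMem) hφ
    (s := w) (by simp) (fun t ht => by simp [P.adj_iff_of_mem P.y_notMem ht, hxy.symm]) hh
    (by rwa [extendPath_apply_right P.u_ne_w P.v_ne_w])

lemma Uset_extendPath_nonempty_of_eq (P : IsDegTwoPath G u v w x x)
    (hφ : IsPCF (delVerts G {u, v, w}) φ) (hac : a ≠ c) {g : ℕ}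
    (hg : (Uset (delVerts G {u, v, w}) φ x).Nonempty → g ∈ Uset (delVerts G {u, v, w}) φ x)
    (hag : a ≠ g) (hcg : c ≠ g) : (Uset G (extendPath φ u v w a b c) x).Nonempty := by
  have hψw := extendPath_apply_right (φ := φ) (a := a) (b := b) (c := c) P.u_ne_w P.v_ne_w
  refine Uset_nonempty_of_adj_deleted_iff_eq_or_eq P.x_notMem
    (fun _ => extendPath_apply_of_notMem) hφ (s' := w) (Set.mem_insert u _)
    (fun t ht => by simp [P.adj_iff_of_mem P.x_notMem ht]) ?_ hg ?_ ?_ <;>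
    simpa only [extendPath_apply_left, hψw]

theorem exists_extension_of_eq (P : IsDegTwoPath G u v w x x) (hLu : (L u).card = 4)
    (hLv : (L v).card = 4) (hLw : (L w).card = 4) (hφ : IsPCF (delVerts G {u, v, w}) φ)
    (hφL : ∀ z, z ∉ ({u, v, w} : Set V) → φ z ∈ L z) :
    ∃ ψ : V → ℕ, (∀ z, z ∉ ({u, v, w} : Set V) → ψ z = φ z) ∧ IsPCFList G L ψ := by
  set U := Uset (delVerts G {u, v, w}) φ x
  obtain ⟨g, hg⟩ : ∃ g, U.Nonempty → g ∈ U := ⟨Classical.epsilon (· ∈ U), Classical.epsilon_spec⟩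
  obtain ⟨a, ha, b, hb, c, hc, hab, hbc, hac⟩ :=
    (Finset.exists_distinct_triple_or_eq hLu hLv hLw (φ x) (φ x) g g).resolve_right
      fun ⟨ξ₁, ξ₂, _, hB, _⟩ => Finset.ne_insert_insert_self_of_card_eq_four hLv _ _ _ hB
  simp only [Finset.mem_sdiff, Finset.mem_insert, Finset.mem_singleton, not_or] at ha hb hc
  have hx := P.Uset_extendPath_nonempty_of_eq (b := b) hφ hac hg ha.2.2 hc.2.2
  exact ⟨_, fun z => extendPath_apply_of_notMem, P.isPCFList_extendPath hφ hφL ha.1 hb.1 hc.1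
    hab hbc hac ha.2.1 hb.2.1 hb.2.2 hc.2.1 hx hx⟩

theorem exists_extension_of_ne (P : IsDegTwoPath G u v w x y) (hxy : x ≠ y)
    (hLu : (L u).card = 4) (hLv : (L v).card = 4) (hLw : (L w).card = 4)
    (hφ : IsPCF (delVerts G {u, v, w}) φ) (hφL : ∀ z, z ∉ ({u, v, w} : Set V) → φ z ∈ L z)
    (hexc : ¬∃ α β ξ₁ ξ₂ : ℕ,
      Uset (delVerts G {u, v, w}) φ x = {α} ∧ Uset (delVerts G {u, v, w}) φ y = {β} ∧
        L u = {φ x, α, ξ₁, ξ₂} ∧ L v = {φ x, φ y, ξ₁, ξ₂} ∧ L w = {φ y, β, ξ₁, ξ₂}) :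
    ∃ ψ : V → ℕ, (∀ z, z ∉ ({u, v, w} : Set V) → ψ z = φ z) ∧ IsPCFList G L ψ := by
  obtain ⟨g, hg⟩ := (Uset (delVerts G {u, v, w}) φ x).exists_eq_singleton_or_eq (φ x)
  obtain ⟨h, hh⟩ := (Uset (delVerts G {u, v, w}) φ y).exists_eq_singleton_or_eq (φ y)
  rcases Finset.exists_distinct_triple_or_eq hLu hLv hLw (φ x) (φ y) g h with
    ⟨a, ha, b, hb, c, hc, hab, hbc, hac⟩ | ⟨ξ₁, ξ₂, hA, hB, hC⟩
  · simp only [Finset.mem_sdiff, Finset.mem_insert, Finset.mem_singleton, not_or] at ha hb hc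
    exact ⟨_, fun z => extendPath_apply_of_notMem, P.isPCFList_extendPath hφ hφL ha.1 hb.1 hc.1
      hab hbc hac ha.2.1 hb.2.1 hb.2.2 hc.2.1
      (P.Uset_extendPath_nonempty_left hxy hφ (hg.imp_right And.left) ha.2.2)
      (P.Uset_extendPath_nonempty_right hxy hφ (hh.imp_right And.left) hc.2.2)⟩
  · rcases hg with hUx | ⟨-, rfl⟩
    · rcases hh with hUy | ⟨-, rfl⟩
      · exact absurd ⟨g, h, ξ₁, ξ₂, hUx, hUy, hA, hB, hC⟩ hexc
      · exact absurd hC (Finset.ne_insert_insert_self_of_card_eq_four hLw _ _ _)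
    · exact absurd hA (Finset.ne_insert_insert_self_of_card_eq_four hLu _ _ _)

end Extension

end IsDegTwoPath

/-- Extension lemma for a path `u–v–w` of degree-2 vertices with outer neighbors
`x` of `u` and `y` of `w`: a PCF coloring of `G - {u,v,w}` extends to `G` unless
`x ≠ y` and the lists have the specific exceptional structure. -/
theorem stmt8 {V : Type*} [Fintype V] [DecidableEq V] (G : SimpleGraph V)
    [DecidableRel G.Adj] (u v w x y : V) (L : V → Finset ℕ) (φ : V → ℕ)
    (huv : G.Adj u v) (hvw : G.Adj v w) (hux : G.Adj u x) (hwy : G.Adj w y)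
    (huw : u ≠ w) (hxv : x ≠ v) (hyv : y ≠ v)
    (hxS : x ∉ ({u, v, w} : Set V)) (hyS : y ∉ ({u, v, w} : Set V))
    (hdu : G.degree u = 2) (hdv : G.degree v = 2) (hdw : G.degree w = 2)
    (hL : ∀ z, (L z).card = G.degree z + 2)
    (hφ : IsPCF (delVerts G {u, v, w}) φ)
    (hφL : ∀ z, z ∉ ({u, v, w} : Set V) → φ z ∈ L z)
    (hcase :
      x = y ∨
      (∃ a b : ℕ, a ≠ b ∧ a ∈ Uset (delVerts G {u, v, w}) φ x ∧
        b ∈ Uset (delVerts G {u, v, w}) φ x) ∨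
      (∃ a b : ℕ, a ≠ b ∧ a ∈ Uset (delVerts G {u, v, w}) φ y ∧
        b ∈ Uset (delVerts G {u, v, w}) φ y) ∨
      ¬ (∃ α β ξ₁ ξ₂ : ℕ,
          Uset (delVerts G {u, v, w}) φ x = {α} ∧
          Uset (delVerts G {u, v, w}) φ y = {β} ∧
          L u = {φ x, α, ξ₁, ξ₂} ∧
          L v = {φ x, φ y, ξ₁, ξ₂} ∧
          L w = {φ y, β, ξ₁, ξ₂})) :
    ∃ ψ : V → ℕ, (∀ z, z ∉ ({u, v, w} : Set V) → ψ z = φ z) ∧ IsPCFList G L ψ := by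
  have P : IsDegTwoPath G u v w x y :=
    { adj_u := G.adj_iff_of_degree_eq_two hdu huv hux hxv.symm
      adj_v := G.adj_iff_of_degree_eq_two hdv huv.symm hvw huw
      adj_w := G.adj_iff_of_degree_eq_two hdw hvw.symm hwy hyv.symm
      u_ne_w := huw
      x_notMem := hxS
      y_notMem := hyS }
  have hLu : (L u).card = 4 := by rw [hL, hdu]
  have hLv : (L v).card = 4 := by rw [hL, hdv]
  have hLw : (L w).card = 4 := by rw [hL, hdw]
  rcases eq_or_ne x y with rfl | hxy
  · exact P.exists_extension_of_eq hLu hLv hLw hφ hφL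
  refine P.exists_extension_of_ne hxy hLu hLv hLw hφ hφL ?_
  rcases hcase with hxy' | ⟨a, b, hab, ha, hb⟩ | ⟨a, b, hab, ha, hb⟩ | hexc
  · exact absurd hxy' hxy
  · rintro ⟨α, -, -, -, hUx, -⟩
    rw [hUx] at ha hb
    exact hab (ha.trans hb.symm)
  · rintro ⟨-, β, -, -, -, hUy, -⟩
    rw [hUy] at ha hb
    exact hab (ha.trans hb.symm)
  · exact hexc
end

section
/- Every connected graph G with at least 2 vertices in which every vertex has degree exactly 2 (i.e., every cycle C_n, n ≥ 3) other than C5 is proper conflict-free 4-choosable: for every list assignment L with |L(v)| = 4 for all v, the cycle admits a proper conflict-free L-coloring. -/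
/-!
On a cycle every vertex has exactly two neighbours, so a colouring is proper conflict-free
exactly when vertices at cyclic distance one or two receive distinct colours, i.e. when it
properly colours the square `C_n²`. Colouring `C_n²` greedily along the cycle, every vertex sees
at most two coloured neighbours except the last one, which sees four. This is repaired by giving
one colour `c` to an initial vertex and deleting `c` from the other lists. If some
`c ∈ L(i + 1) \ L(i)`, start at `i + 1`: the last vertex `i` does not lose a colour. Otherwise
the lists are nested all around the cycle, hence equal, and `c` can be given to two vertices at
distance three, which are non-adjacent in `C_n²` once `n ≥ 6`. For `n ≤ 4`, `C_n²` is complete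
and plain greedy colouring works (for `n = 5` it is `K₅`).
-/

open Finset

theorem ZMod.natCast_ne_zero_of_lt {n a : ℕ} (h0 : 0 < a) (h : a < n) :
    (a : ZMod n) ≠ 0 := by
  rw [Ne, ZMod.natCast_eq_zero_iff]
  exact fun hd => (Nat.le_of_dvd h0 hd).not_gt h

theorem ZMod.val_add_add_eq_of_lt_val {n : ℕ} [NeZero n] {v d : ZMod n}
    (h : (v + d).val < v.val) : (v + d).val + n = v.val + d.val := by
  by_cases hle : n ≤ v.val + d.val
  · exact (ZMod.val_add_val_of_le hle).symm
  · rw [ZMod.val_add_of_lt (by omega)] at h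
    omega

namespace SimpleGraph

variable {W α : Type*}

def ListColorable (H : SimpleGraph W) (L : W → Finset α) : Prop :=
  ∃ f : W → α, (∀ v, f v ∈ L v) ∧ ∀ ⦃u v⦄, H.Adj u v → f u ≠ f v

theorem ListColorable.mono {H : SimpleGraph W} {L L' : W → Finset α} (hL : ∀ v, L v ⊆ L' v)
    (h : H.ListColorable L) : H.ListColorable L' :=
  let ⟨f, hfL, hf⟩ := h
  ⟨f, fun v => hL v (hfL v), hf⟩

theorem listColorable_of_exists_blockers [Finite W] [DecidableEq α] (H : SimpleGraph W)
    (L : W → Finset α) (r : W → ℕ) (hr : Function.Injective r)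
    (hB : ∀ v, ∃ B : Finset W, #B < #(L v) ∧
      ∀ u, H.Adj v u → r u < r v → ¬Disjoint (L u) (L v) → u ∈ B) :
    H.ListColorable L := by
  classical
  cases nonempty_fintype W
  have hne : ∀ v, (L v).Nonempty := fun v => by
    obtain ⟨B, hBcard, -⟩ := hB v
    exact card_pos.mp (by omega)
  choose f₀ hf₀ using hne
  suffices ∀ s : Finset W, ∃ f : W → α, (∀ v, f v ∈ L v) ∧
      ∀ u ∈ s, ∀ v ∈ s, H.Adj u v → f u ≠ f v by
    obtain ⟨f, hfL, hf⟩ := this univ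
    exact ⟨f, hfL, fun u v huv => hf u (mem_univ u) v (mem_univ v) huv⟩
  intro s
  induction s using Finset.induction_on_max_value r with
  | empty => exact ⟨f₀, hf₀, by simp⟩
  | insert a s ha hmax ih =>
    obtain ⟨f, hfL, hf⟩ := ih
    obtain ⟨B, hBcard, hBmem⟩ := hB a
    obtain ⟨c, hcL, hcB⟩ := exists_mem_notMem_of_card_lt_card (card_image_le.trans_lt hBcard)
    have hc : ∀ u ∈ s, H.Adj a u → f u ≠ c := by
      rintro u hu hau rfl
      by_cases hdisj : Disjoint (L u) (L a)
      · exact Finset.disjoint_left.mp hdisj (hfL u) hcL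
      · have hlt : r u < r a := (hmax u hu).lt_of_ne (hr.ne (ne_of_mem_of_not_mem hu ha))
        exact hcB (mem_image_of_mem f (hBmem u hau hlt hdisj))
    refine ⟨Function.update f a c, fun v => ?_, ?_⟩
    · rcases eq_or_ne v a with rfl | hv
      · simpa using hcL
      · simpa [hv] using hfL v
    · simp only [mem_insert]
      rintro u (rfl | hu) v (rfl | hv) huv
      · exact absurd rfl huv.ne
      · simpa [huv.ne'] using (hc v hv huv).symm
      · simpa [huv.ne] using hc u hu huv.symm
      · simpa [ne_of_mem_of_not_mem hu ha, ne_of_mem_of_not_mem hv ha] using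
          hf u hu v hv huv

theorem listColorable_of_card_le [Fintype W] [DecidableEq α] (H : SimpleGraph W)
    (L : W → Finset α) (hL : ∀ v, Fintype.card W ≤ #(L v)) : H.ListColorable L := by
  classical
  refine listColorable_of_exists_blockers H L (fun v => Fintype.equivFin W v)
    (Fin.val_injective.comp (Fintype.equivFin W).injective) fun v =>
      ⟨univ.erase v, ?_, fun u huv _ _ => mem_erase.mpr ⟨huv.ne', mem_univ u⟩⟩
  rw [card_erase_of_mem (mem_univ v), card_univ]
  have := hL v
  have : 0 < Fintype.card W := Fintype.card_pos_iff.mpr ⟨v⟩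
  omega

theorem listColorable_circulantGraph_of_translate {G : Type*} [AddGroup G] {s : Set G}
    {L : G → Finset α} (k : G) (h : (circulantGraph s).ListColorable fun i => L (i + k)) :
    (circulantGraph s).ListColorable L := by
  obtain ⟨f, hfL, hf⟩ := h
  refine ⟨fun i => f (i - k), fun i => by simpa using hfL (i - k), fun u v huv => hf ?_⟩
  rwa [← circulantGraph_adj_translate (d := k), sub_add_cancel, sub_add_cancel]

variable {n : ℕ}

theorem eq_of_circulantGraph_adj_of_val_lt [NeZero n] (hn : 3 ≤ n) {u v : ZMod n}
    (h : (circulantGraph ({1, 2} : Set (ZMod n))).Adj v u) (hlt : u.val < v.val) :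
    u = v - 1 ∨ u = v - 2 ∨ u = 0 ∨ (v = -1 ∧ u = 1) := by
  simp only [circulantGraph_adj, Set.mem_insert_iff, Set.mem_singleton_iff] at h
  have hv := v.val_lt
  obtain ⟨-, (h | h) | (h | h)⟩ := h
  · exact Or.inl (by linear_combination -h)
  · exact Or.inr (Or.inl (by linear_combination -h))
  · obtain rfl : u = v + 1 := by linear_combination h
    have key := ZMod.val_add_add_eq_of_lt_val hlt
    rw [ZMod.val_one'' (by omega)] at key
    exact Or.inr (Or.inr (Or.inl ((ZMod.val_eq_zero _).mp (by omega))))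
  · obtain rfl : u = v + 2 := by linear_combination h
    have key := ZMod.val_add_add_eq_of_lt_val hlt
    rw [ZMod.val_two_eq_two_mod, Nat.mod_eq_of_lt (by omega)] at key
    rcases (by omega : (v + 2).val = 0 ∨ (v + 2).val = 1) with h0 | h1
    · exact Or.inr (Or.inr (Or.inl ((ZMod.val_eq_zero _).mp h0)))
    · have hu : v + 2 = 1 := ZMod.val_injective n (h1.trans (ZMod.val_one'' (by omega)).symm)
      exact Or.inr (Or.inr (Or.inr ⟨by linear_combination hu, hu⟩))

theorem listColorable_circulantGraph_of_mem_of_notMem [NeZero n] [DecidableEq α] (hn : 3 ≤ n)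
    {K : ZMod n → Finset α} (hK : ∀ i, 4 ≤ #(K i)) {c : α} (hc₀ : c ∈ K 0)
    (hc : c ∉ K (-1)) : (circulantGraph ({1, 2} : Set (ZMod n))).ListColorable K := by
  -- Greedy in the order `0, 1, …, n - 1`; `c` is kept only at `0`, so `0` blocks nobody and
  -- the last vertex `-1` keeps its four colours.
  let L : ZMod n → Finset α := fun i => if i = 0 then {c} else (K i).erase c
  refine ListColorable.mono (L := L) (fun i => ?_) ?_
  · dsimp only [L]
    split_ifs with h
    · simpa [h] using hc₀
    · exact erase_subset c (K i)
  refine listColorable_of_exists_blockers _ L ZMod.val (ZMod.val_injective n) fun v => ?_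
  by_cases hv₀ : v = 0
  · exact ⟨∅, by simp [L, hv₀], fun u _ hlt => by simp [hv₀] at hlt⟩
  have hLv : L v = (K v).erase c := if_neg hv₀
  refine ⟨if v = -1 then {v - 1, v - 2, 1} else {v - 1, v - 2}, ?_, fun u huv hlt hLuv => ?_⟩
  · split_ifs with hv₁
    · rw [hLv, hv₁, erase_eq_of_notMem hc]
      exact card_le_three.trans_lt (hK _)
    · have : #(K v) - 1 ≤ #(L v) := by rw [hLv]; exact pred_card_le_card_erase
      have := hK v
      exact card_le_two.trans_lt (by omega)
  · rcases eq_of_circulantGraph_adj_of_val_lt hn huv hlt with h | h | h | ⟨hv, h⟩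
    · split_ifs <;> simp [h]
    · split_ifs <;> simp [h]
    · exact absurd (by simp [L, h, hv₀]) hLuv
    · simp [hv, h]

theorem listColorable_circulantGraph_of_mem_of_mem [NeZero n] [DecidableEq α] (hn : 6 ≤ n)
    {K : ZMod n → Finset α} (hK : ∀ i, 4 ≤ #(K i)) {c : α} (hc₀ : c ∈ K 0)
    (hc₃ : c ∈ K (-3)) : (circulantGraph ({1, 2} : Set (ZMod n))).ListColorable K := by
  -- As above, with `c` kept at `0` and `-3`: the last vertex `-1` is blocked only by `-2` and `1`.
  have hne : ∀ a : ℕ, 0 < a → a < 6 → (a : ZMod n) ≠ 0 := fun a h0 h6 =>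
    ZMod.natCast_ne_zero_of_lt h0 (by omega)
  let P : ZMod n → Prop := fun i => i = 0 ∨ i = -3
  have hfar : ∀ u v, P u → P v → ¬(circulantGraph ({1, 2} : Set (ZMod n))).Adj u v := by
    have h₀₃ : ¬(circulantGraph ({1, 2} : Set (ZMod n))).Adj 0 (-3) := by
      simp only [circulantGraph_adj, Set.mem_insert_iff, Set.mem_singleton_iff]
      rintro ⟨-, (h | h) | (h | h)⟩
      · exact hne 2 (by norm_num) (by norm_num) (by push_cast; linear_combination h)
      · exact hne 1 (by norm_num) (by norm_num) (by push_cast; linear_combination h)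
      · exact hne 4 (by norm_num) (by norm_num) (by push_cast; linear_combination -h)
      · exact hne 5 (by norm_num) (by norm_num) (by push_cast; linear_combination -h)
    rintro u v (rfl | rfl) (rfl | rfl) huv
    · exact huv.ne rfl
    · exact h₀₃ huv
    · exact h₀₃ huv.symm
    · exact huv.ne rfl
  have hP₁ : ¬P (-1) := by
    rintro (h | h)
    · exact hne 1 (by norm_num) (by norm_num) (by push_cast; linear_combination -h)
    · exact hne 2 (by norm_num) (by norm_num) (by push_cast; linear_combination h)
  let L : ZMod n → Finset α := fun i => if P i then {c} else (K i).erase c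
  have hdisj : ∀ u v, P u → ¬P v → Disjoint (L u) (L v) := fun u v hu hv => by
    simp [L, hu, hv]
  refine ListColorable.mono (L := L) (fun i => ?_) ?_
  · dsimp only [L]
    split_ifs with h
    · rcases h with rfl | rfl <;> simpa
    · exact erase_subset c (K i)
  refine listColorable_of_exists_blockers _ L ZMod.val (ZMod.val_injective n) fun v => ?_
  by_cases hv : P v
  · refine ⟨∅, by simp [L, hv], fun u huv _ hLuv => ?_⟩
    by_cases hu : P u
    · exact absurd huv (hfar v u hv hu)
    · exact absurd (hdisj v u hv hu).symm hLuv
  have hLv : #(K v) - 1 ≤ #(L v) := by simp only [L, if_neg hv]; exact pred_card_le_card_erase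
  refine ⟨if v = -1 then {v - 1, 1} else {v - 1, v - 2}, ?_, fun u huv hlt hLuv => ?_⟩
  · have := hK v
    split_ifs <;> exact card_le_two.trans_lt (by omega)
  · rcases eq_of_circulantGraph_adj_of_val_lt (by omega) huv hlt with h | h | h | ⟨hv₁, h⟩
    · split_ifs <;> simp [h]
    · split_ifs with hv₁
      · exact absurd (hdisj u v (Or.inr (by rw [h, hv₁]; ring)) hv) hLuv
      · simp [h]
    · exact absurd (hdisj u v (Or.inl h) hv) hLuv
    · simp [hv₁, h]

theorem listColorable_circulantGraph_one_two [NeZero n] [DecidableEq α] (hn₃ : 3 ≤ n)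
    (hn₅ : n ≠ 5) (K : ZMod n → Finset α) (hK : ∀ i, 4 ≤ #(K i)) :
    (circulantGraph ({1, 2} : Set (ZMod n))).ListColorable K := by
  rcases le_or_gt n 4 with hn₄ | hn₆
  · exact listColorable_of_card_le _ K fun i => by rw [ZMod.card]; exact hn₄.trans (hK i)
  by_cases hstep : ∃ k, ∃ c ∈ K (k + 1), c ∉ K k
  · obtain ⟨k, c, hc₁, hc⟩ := hstep
    refine listColorable_circulantGraph_of_translate (k + 1)
      (listColorable_circulantGraph_of_mem_of_notMem hn₃ (fun i => hK _) (c := c) ?_ ?_)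
    · rwa [zero_add]
    · rwa [show -1 + (k + 1) = k by ring]
  · push Not at hstep
    obtain ⟨c, hc⟩ := card_pos.mp ((by norm_num : 0 < 4).trans_le (hK 0))
    refine listColorable_circulantGraph_of_mem_of_mem (by omega) hK hc ?_
    have h₁ : c ∈ K (-1) := hstep (-1) c (by rwa [neg_add_cancel])
    have h₂ : c ∈ K (-2) := hstep (-2) c (by rwa [show (-2 : ZMod n) + 1 = -1 by ring])
    exact hstep (-3) c (by rwa [show (-3 : ZMod n) + 1 = -2 by ring])

variable {V : Type*} {G : SimpleGraph V}

theorem IsRegularOfDegree.isCycles [Fintype V] [DecidableRel G.Adj]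
    (hreg : G.IsRegularOfDegree 2) : G.IsCycles := fun v _ => by
  rw [Set.ncard_eq_toFinset_card']
  exact hreg v

theorem IsCycles.eq_or_eq_of_adj (hcyc : G.IsCycles) {v a b x : V} (ha : G.Adj v a)
    (hb : G.Adj v b) (hab : a ≠ b) (hx : G.Adj v x) : x = a ∨ x = b :=
  or_iff_not_imp_left.mpr fun hxa =>
    (hcyc.existsUnique_ne_adj ha).unique ⟨Ne.symm hxa, hx⟩ ⟨hab, hb⟩

theorem Connected.exists_isHamiltonianCycle [Finite V] [DecidableEq V] (hconn : G.Connected)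
    (hcyc : G.IsCycles) (hne : ∀ v, (G.neighborSet v).Nonempty) :
    ∃ v, ∃ p : G.Walk v v, p.IsHamiltonianCycle := by
  obtain ⟨v⟩ := hconn.nonempty
  obtain ⟨p, hp, hverts⟩ := hcyc.exists_cycle_toSubgraph_verts_eq_connectedComponentSupp
    (c := G.connectedComponentMk v) rfl (hne v)
  have hsupp : ∀ w, w ∈ p.support := fun w => by
    rw [← Walk.mem_verts_toSubgraph, hverts, ConnectedComponent.mem_supp_iff,
      ConnectedComponent.eq]
    exact hconn.preconnected w v
  refine ⟨v, p, hp, hp.isPath_tail.isHamiltonian_of_mem fun w => ?_⟩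
  have hw := hsupp w
  rw [← Walk.cons_support_tail hp.not_nil, List.mem_cons] at hw
  exact hw.elim (· ▸ p.tail.end_mem_support) id

theorem Connected.nonempty_iso_circulantGraph [Fintype V] [DecidableRel G.Adj]
    (hconn : G.Connected) (hreg : G.IsRegularOfDegree 2) :
    3 ≤ Fintype.card V ∧
      Nonempty (circulantGraph ({1} : Set (ZMod (Fintype.card V))) ≃g G) := by
  classical
  have hcyc := hreg.isCycles
  obtain ⟨v, p, hp⟩ := hconn.exists_isHamiltonianCycle hcyc fun v =>
    (G.degree_pos_iff_exists_adj v).mp (by rw [hreg v]; norm_num)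
  set n := Fintype.card V
  have hlen : p.length = n := hp.length_eq
  have hn : 3 ≤ n := hlen ▸ hp.isCycle.three_le_length
  have : NeZero n := ⟨by omega⟩
  set e : ZMod n → V := fun i => p.getVert i.val with he
  have he_succ : ∀ i : ZMod n, e (i + 1) = p.getVert (i.val + 1) := by
    intro i
    have hval : (i + 1).val = (i.val + 1) % n := by rw [ZMod.val_add, ZMod.val_one'' (by omega)]
    by_cases h : i.val + 1 < n
    · simp only [he, hval, Nat.mod_eq_of_lt h]
    · have : i.val + 1 = n := by have := i.val_lt; omega
      simp only [he, hval, this, Nat.mod_self, Walk.getVert_zero, ← hlen, Walk.getVert_length]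
  have hadj : ∀ i, G.Adj (e i) (e (i + 1)) := fun i =>
    he_succ i ▸ p.adj_getVert_succ (by rw [hlen]; exact i.val_lt)
  have hinj : Function.Injective e := fun i j h =>
    ZMod.val_injective n (hp.isCycle.getVert_injOn' (by simp; have := i.val_lt; omega)
      (by simp; have := j.val_lt; omega) h)
  have hbij : Function.Bijective e :=
    (Fintype.bijective_iff_injective_and_card e).mpr ⟨hinj, by simp [n]⟩
  refine ⟨hn, ⟨Equiv.ofBijective e hbij, fun {i j} => ?_⟩⟩
  change G.Adj (e i) (e j) ↔ _
  simp only [circulantGraph_adj, Set.mem_singleton_iff]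
  constructor
  · intro h
    refine ⟨fun hij => h.ne (congrArg e hij), ?_⟩
    have hne : i + 1 ≠ i - 1 := fun h' => ZMod.natCast_ne_zero_of_lt (n := n) (a := 2)
      (by norm_num) (by omega) (by push_cast; linear_combination h')
    rcases hcyc.eq_or_eq_of_adj (hadj i) (by simpa using (hadj (i - 1)).symm) (hinj.ne hne) h
      with h | h
    · right; rw [hinj h]; ring
    · left; rw [hinj h]; ring
  · rintro ⟨-, h | h⟩
    · rw [sub_eq_iff_eq_add'.mp h]; exact (hadj j).symm
    · rw [sub_eq_iff_eq_add.mp h, add_comm]; exact hadj i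

end SimpleGraph

open SimpleGraph

theorem IsPCF.comp_iso {V W β : Type*} {H : SimpleGraph W} {G : SimpleGraph V} {f : W → β}
    (hf : IsPCF H f) (e : H ≃g G) : IsPCF G (f ∘ e.symm) := by
  obtain ⟨hproper, hcf⟩ := hf
  refine ⟨fun a b hab => hproper (e.symm.map_adj_iff.mpr hab), fun v ⟨u, hvu⟩ => ?_⟩
  obtain ⟨c, w, ⟨hvw, hwc⟩, huniq⟩ :=
    hcf (e.symm v) ⟨e.symm u, e.symm.map_adj_iff.mpr hvu⟩
  refine ⟨c, e w, ⟨?_, by simpa using hwc⟩, fun x ⟨hvx, hxc⟩ => ?_⟩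
  · simpa using e.map_adj_iff.mpr hvw
  · rw [← huniq (e.symm x) ⟨e.symm.map_adj_iff.mpr hvx, hxc⟩, RelIso.apply_symm_apply]

theorem isPCF_circulantGraph_one {n : ℕ} (hn : 3 ≤ n) {β : Type*} {f : ZMod n → β}
    (hf : ∀ ⦃u v⦄, (circulantGraph ({1, 2} : Set (ZMod n))).Adj u v → f u ≠ f v) :
    IsPCF (circulantGraph ({1} : Set (ZMod n))) f := by
  have h₁ : (1 : ZMod n) ≠ 0 := by
    exact_mod_cast ZMod.natCast_ne_zero_of_lt (a := 1) one_pos (by omega)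
  have h₂ : (2 : ZMod n) ≠ 0 := by
    exact_mod_cast ZMod.natCast_ne_zero_of_lt (a := 2) two_pos (by omega)
  refine ⟨fun u v huv => hf ?_, fun v _ => ⟨f (v + 1), v + 1, ⟨?_, rfl⟩, ?_⟩⟩
  · simp only [circulantGraph_adj, Set.mem_insert_iff, Set.mem_singleton_iff] at huv ⊢
    tauto
  · simp only [circulantGraph_adj, Set.mem_singleton_iff]
    exact ⟨fun h => h₁ (by linear_combination -h), Or.inr (by ring)⟩
  · rintro w ⟨hvw, hw⟩
    simp only [circulantGraph_adj, Set.mem_singleton_iff] at hvw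
    obtain ⟨-, h | h⟩ := hvw
    · refine absurd hw (hf ?_)
      simp only [circulantGraph_adj, Set.mem_insert_iff, Set.mem_singleton_iff]
      exact ⟨fun h' => h₂ (by linear_combination -h' - h),
        Or.inr (Or.inr (by linear_combination h))⟩
    · linear_combination h

theorem stmt12_general {V : Type*} [Fintype V] (G : SimpleGraph V) [DecidableRel G.Adj]
    (hconn : G.Connected)
    (hreg : ∀ v : V, G.degree v = 2) (hC5 : Fintype.card V ≠ 5)
    (L : V → Finset ℕ) (hL : ∀ v, (L v).card = 4) :
    ∃ φ : V → ℕ, (∀ v, φ v ∈ L v) ∧ IsPCF G φ := by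
  obtain ⟨hn, ⟨e⟩⟩ := hconn.nonempty_iso_circulantGraph hreg
  have : NeZero (Fintype.card V) := ⟨by omega⟩
  obtain ⟨f, hfL, hf⟩ := listColorable_circulantGraph_one_two hn hC5
    (fun i => L (e i)) fun i => (hL _).ge
  exact ⟨f ∘ e.symm, fun v => by simpa using hfL (e.symm v),
    (isPCF_circulantGraph_one hn hf).comp_iso e⟩

/-- Every connected graph with at least 2 vertices in which every vertex has degree
exactly 2 (i.e. every cycle `C_n`), other than `C₅`, is proper conflict-free
4-choosable. -/
theorem stmt12 {V : Type*} [Fintype V] (G : SimpleGraph V) [DecidableRel G.Adj]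
    (hconn : G.Connected) (hcard : 2 ≤ Fintype.card V)
    (hreg : ∀ v : V, G.degree v = 2) (hC5 : Fintype.card V ≠ 5)
    (L : V → Finset ℕ) (hL : ∀ v, (L v).card = 4) :
    ∃ φ : V → ℕ, (∀ v, φ v ∈ L v) ∧ IsPCF G φ :=
  stmt12_general G hconn hreg hC5 L hL
end

section
/- The 5-cycle C5 is not proper conflict-free 4-choosable: there exists a list assignment L on the vertices of C5 with |L(v)| = 4 for all v (indeed, the constant assignment L(v) = {1,2,3,4}) admitting no proper conflict-free L-coloring. Hence C5 is not proper conflict-free (degree+2)-choosable. -/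
instance : DecidableRel (Cyc 5).Adj := fun a b =>
  decidable_of_iff (a ≠ b ∧ (a - b = 1 ∨ b - a = 1)) (by
    simp [Cyc, SimpleGraph.fromRel_adj])

lemma cyc5_adj (a b : ZMod 5) : (Cyc 5).Adj a b ↔ a ≠ b ∧ (a - b = 1 ∨ b - a = 1) := by
  simp [Cyc, SimpleGraph.fromRel_adj]

lemma cyc5_adj_succ (v : ZMod 5) : (Cyc 5).Adj v (v + 1) := by
  rw [cyc5_adj]
  constructor
  · intro h
    have : (1 : ZMod 5) = 0 := by have := congrArg (· - v) h; simpa using this.symm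
    exact absurd this (by decide)
  · right; ring_nf

lemma cyc5_nbrs {v u : ZMod 5} (h : (Cyc 5).Adj v u) : u = v + 1 ∨ u = v - 1 := by
  rw [cyc5_adj] at h
  rcases h.2 with h2 | h2
  · right; linear_combination -h2
  · left; linear_combination h2

lemma pcf_cf {φ : ZMod 5 → ℕ} (h : IsPCF (Cyc 5) φ) (v : ZMod 5) :
    φ (v + 1) ≠ φ (v - 1) := by
  intro heq
  obtain ⟨c, u, ⟨hu1, hu2⟩, huniq⟩ := h.2 v ⟨v + 1, cyc5_adj_succ v⟩
  have hadj1 : (Cyc 5).Adj v (v + 1) := cyc5_adj_succ v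
  have hadj2 : (Cyc 5).Adj v (v - 1) := by
    have := cyc5_adj_succ (v - 1)
    simpa using this.symm
  have hne : v + 1 ≠ v - 1 := by
    intro h'
    have : (2 : ZMod 5) = 0 := by linear_combination h'
    exact absurd this (by decide)
  rcases cyc5_nbrs hu1 with rfl | rfl
  · have := huniq (v - 1) ⟨hadj2, by rw [← heq, hu2]⟩
    exact hne this.symm
  · have := huniq (v + 1) ⟨hadj1, by rw [heq, hu2]⟩
    exact hne this

lemma no_pcf : ¬ ∃ φ : ZMod 5 → ℕ,
    (∀ v, φ v ∈ ({1, 2, 3, 4} : Finset ℕ)) ∧ IsPCF (Cyc 5) φ := by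
  rintro ⟨φ, hmem, hpcf⟩
  have hinj : Function.Injective φ := by
    intro a b hab
    by_contra hne
    have hd : b - a = 1 ∨ b - a = 2 ∨ b - a = 3 ∨ b - a = 4 := by
      have hba : b - a ≠ 0 := by
        intro h
        exact hne (by linear_combination -h)
      revert hba; generalize b - a = d; revert d; decide
    have h5 : (5 : ZMod 5) = 0 := by decide
    rcases hd with h | h | h | h
    · have hb : b = a + 1 := by linear_combination h
      have hadj : (Cyc 5).Adj a b := by rw [hb]; exact cyc5_adj_succ a
      exact hpcf.1 hadj hab
    · have hb : b = (a + 1) + 1 := by linear_combination h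
      have ha : a = (a + 1) - 1 := by ring
      have : φ ((a + 1) + 1) = φ ((a + 1) - 1) := by rw [← hb, ← ha]; exact hab.symm
      exact pcf_cf hpcf (a + 1) this
    · have ha : a = (b + 1) + 1 := by linear_combination -h - h5
      have hb : b = (b + 1) - 1 := by ring
      have : φ ((b + 1) + 1) = φ ((b + 1) - 1) := by rw [← ha, ← hb]; exact hab
      exact pcf_cf hpcf (b + 1) this
    · have ha : a = b + 1 := by linear_combination -h - h5
      have hadj : (Cyc 5).Adj b a := by rw [ha]; exact cyc5_adj_succ b
      exact hpcf.1 hadj hab.symm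
  have h5 : (Finset.univ : Finset (ZMod 5)).card ≤ ({1, 2, 3, 4} : Finset ℕ).card :=
    Finset.card_le_card_of_injOn φ (fun v _ => hmem v) (fun a _ b _ h => hinj h)
  simp at h5

/-- `C₅` is not proper conflict-free 4-choosable: the constant list assignment
`{1,2,3,4}` admits no proper conflict-free coloring; hence `C₅` is not proper
conflict-free (degree+2)-choosable. -/
theorem stmt13 :
    (¬ ∃ φ : ZMod 5 → ℕ, (∀ v, φ v ∈ ({1, 2, 3, 4} : Finset ℕ)) ∧ IsPCF (Cyc 5) φ) ∧
    (∃ L : ZMod 5 → Finset ℕ, (∀ v, (L v).card = (Cyc 5).degree v + 2) ∧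
      ¬ ∃ φ : ZMod 5 → ℕ, (∀ v, φ v ∈ L v) ∧ IsPCF (Cyc 5) φ) := by
  refine ⟨no_pcf, ⟨fun _ => {1, 2, 3, 4}, fun v => ?_, no_pcf⟩⟩
  have hdeg : ∀ v : ZMod 5, (Cyc 5).degree v = 2 := by decide
  rw [hdeg v]
  rfl
end

section
/- Let G be a graph with a 4-cycle x–u–y–v where d(u) = d(v) = 2 and d(x) = 3 with N(x) = {u, v, p}. Let L be a list assignment with |L(z)| = d(z) + 2 for all z, and let φ be a proper conflict-free L-coloring of G − v. Then φ extends to a proper conflict-free L-coloring of G: coloring v with any color in L(v) \ {φ(x), φ(y), β}, where β ∈ U_φ(y, G−v), yields such a coloring. -/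
/-!
Recolouring only `v` can break conflict-freeness only at `v` and at its neighbours `x` and `y`;
every other vertex keeps its neighbourhood and its colours. At `v`, the colour `φ(x)` is unique
because `φ(x) ≠ φ(y)`, forced by conflict-freeness at `u`, whose only neighbours are `x` and `y`.
At `y`, the colour `β` stays unique since `c ≠ β`. At `x`, whose neighbours in `G - v` are `u`
and `p`, conflict-freeness forces `φ(u) ≠ φ(p)`, so one of these two colours differs from `c` and
stays unique. Such a `c` exists because `|L(v)| = 4` and only three colours are forbidden.
-/

open Function

section

variable {V : Type*} {G : SimpleGraph V}

lemma delVerts_singleton_adj_iff {v w z : V} (hw : w ≠ v) :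
    (delVerts G {v}).Adj w z ↔ G.Adj w z ∧ z ≠ v := by
  simp [delVerts, hw]

lemma adj_iff_mem_of_degree_le {w : V} [Fintype (G.neighborSet w)] {s : Finset V}
    (hs : ∀ z ∈ s, G.Adj w z) (hdeg : G.degree w ≤ s.card) (z : V) :
    G.Adj w z ↔ z ∈ s := by
  have hN : s = G.neighborFinset w :=
    Finset.eq_of_subset_of_card_le (fun z hz => (G.mem_neighborFinset w z).2 (hs z hz))
      (by rwa [G.card_neighborFinset_eq_degree])
  rw [← G.mem_neighborFinset, ← hN]

lemma adj_iff_of_degree_eq_two [DecidableEq V] {w a b : V} [Fintype (G.neighborSet w)]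
    (ha : G.Adj w a) (hb : G.Adj w b) (hab : a ≠ b) (hdeg : G.degree w = 2) (z : V) :
    G.Adj w z ↔ z = a ∨ z = b := by
  simpa using adj_iff_mem_of_degree_le (s := {a, b}) (by simp [ha, hb])
    (by rw [hdeg, Finset.card_pair hab]) z

lemma adj_iff_of_degree_eq_three [DecidableEq V] {w a b d : V} [Fintype (G.neighborSet w)]
    (ha : G.Adj w a) (hb : G.Adj w b) (hd : G.Adj w d) (hab : a ≠ b) (had : a ≠ d)
    (hbd : b ≠ d) (hdeg : G.degree w = 3) (z : V) :
    G.Adj w z ↔ z = a ∨ z = b ∨ z = d := by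
  simpa using adj_iff_mem_of_degree_le (s := {a, b, d}) (by simp [ha, hb, hd])
    (by rw [hdeg, Finset.card_eq_three.2 ⟨a, b, d, hab, had, hbd, rfl⟩]) z

lemma mem_uset_of_adj_iff {φ : V → ℕ} {w a b : V} (hN : ∀ z, G.Adj w z ↔ z = a ∨ z = b)
    (hab : φ a ≠ φ b) : φ a ∈ Uset G φ w :=
  ⟨a, ⟨(hN a).2 (.inl rfl), rfl⟩, fun z ⟨hz, hzc⟩ =>
    ((hN z).1 hz).resolve_right (by rintro rfl; exact hab hzc.symm)⟩

lemma ne_of_adj_iff_of_uset_nonempty {φ : V → ℕ} {w a b : V}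
    (hN : ∀ z, G.Adj w z ↔ z = a ∨ z = b) (hab : a ≠ b) (hU : (Uset G φ w).Nonempty) :
    φ a ≠ φ b := by
  intro hφ
  obtain ⟨_, z, ⟨hz, rfl⟩, huniq⟩ := hU
  have ha := huniq a ⟨(hN a).2 (.inl rfl), by rcases (hN z).1 hz with rfl | rfl <;> simp [hφ]⟩
  have hb := huniq b ⟨(hN b).2 (.inr rfl), by rcases (hN z).1 hz with rfl | rfl <;> simp [hφ]⟩
  exact hab (ha.trans hb.symm)

section Extension

variable [DecidableEq V] {φ : V → ℕ} {v : V} {c : ℕ}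

lemma mem_uset_update {w : V} {c₀ : ℕ} (hw : w ≠ v) (hc₀ : c₀ ∈ Uset (delVerts G {v}) φ w)
    (hne : G.Adj w v → c₀ ≠ c) : c₀ ∈ Uset G (update φ v c) w := by
  obtain ⟨z, ⟨hz, hzc⟩, huniq⟩ := hc₀
  have hzv : z ≠ v := ((delVerts_singleton_adj_iff hw).1 hz).2
  refine ⟨z, ⟨hz.1, by rwa [update_of_ne hzv]⟩, fun z' ⟨hz', hz'c⟩ => ?_⟩
  rcases eq_or_ne z' v with rfl | hz'v
  · rw [update_self] at hz'c
    exact absurd hz'c.symm (hne hz')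
  · rw [update_of_ne hz'v] at hz'c
    exact huniq z' ⟨(delVerts_singleton_adj_iff hw).2 ⟨hz', hz'v⟩, hz'c⟩

lemma isPCF_update_of_delVerts (hφ : IsPCF (delVerts G {v}) φ)
    (hproper : ∀ w, G.Adj v w → c ≠ φ w) (hv : ∃ c₀, c₀ ∈ Uset G (update φ v c) v)
    (hnbr : ∀ w, G.Adj v w → ∃ c₀ ∈ Uset (delVerts G {v}) φ w, c₀ ≠ c) :
    IsPCF G (update φ v c) := by
  refine ⟨fun a b hab => ?_, fun w ⟨z, hz⟩ => ?_⟩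
  · rcases eq_or_ne a v with rfl | hav
    · simpa [update_of_ne hab.ne'] using hproper b hab
    rcases eq_or_ne b v with rfl | hbv
    · simpa [update_of_ne hav] using (hproper a hab.symm).symm
    simpa [update_of_ne hav, update_of_ne hbv] using
      hφ.1 ((delVerts_singleton_adj_iff hav).2 ⟨hab, hbv⟩)
  rcases eq_or_ne w v with rfl | hwv
  · exact hv
  by_cases hvw : G.Adj v w
  · obtain ⟨c₀, hc₀, hne⟩ := hnbr w hvw
    exact ⟨c₀, mem_uset_update hwv hc₀ fun _ => hne⟩
  have hzv : z ≠ v := by rintro rfl; exact hvw hz.symm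
  obtain ⟨c₀, hc₀⟩ := hφ.2 w ⟨z, (delVerts_singleton_adj_iff hwv).2 ⟨hz, hzv⟩⟩
  exact ⟨c₀, mem_uset_update hwv hc₀ fun h => absurd h.symm hvw⟩

lemma isPCFList_update_of_adj_iff {L : V → Finset ℕ} {x y u p : V} {β : ℕ}
    (hφ : IsPCF (delVerts G {v}) φ) (hφL : ∀ z, z ≠ v → φ z ∈ L z)
    (hNv : ∀ z, G.Adj v z ↔ z = x ∨ z = y) (hNx : ∀ z, (delVerts G {v}).Adj x z ↔ z = u ∨ z = p)
    (hup : u ≠ p) (hφxy : φ x ≠ φ y) (hβ : β ∈ Uset (delVerts G {v}) φ y) (hcL : c ∈ L v)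
    (hcx : c ≠ φ x) (hcy : c ≠ φ y) (hcβ : c ≠ β) :
    IsPCFList G L (update φ v c) := by
  have hxv : x ≠ v := ((hNv x).2 (.inl rfl)).ne'
  have hyv : y ≠ v := ((hNv y).2 (.inr rfl)).ne'
  have hφup : φ u ≠ φ p :=
    ne_of_adj_iff_of_uset_nonempty hNx hup (hφ.2 x ⟨u, (hNx u).2 (.inl rfl)⟩)
  refine ⟨fun z => ?_, isPCF_update_of_delVerts hφ ?_ ?_ ?_⟩
  · rcases eq_or_ne z v with rfl | hzv
    · simpa using hcL
    · simpa [update_of_ne hzv] using hφL z hzv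
  · intro w hw
    rcases (hNv w).1 hw with rfl | rfl <;> assumption
  · refine ⟨_, mem_uset_of_adj_iff hNv ?_⟩
    simpa [update_of_ne hxv, update_of_ne hyv] using hφxy
  · intro w hw
    rcases (hNv w).1 hw with rfl | rfl
    · by_cases hcu : c = φ u
      · exact ⟨φ p, mem_uset_of_adj_iff (fun z => (hNx z).trans or_comm) hφup.symm,
          hcu ▸ hφup.symm⟩
      · exact ⟨φ u, mem_uset_of_adj_iff hNx hφup, Ne.symm hcu⟩
    · exact ⟨β, hβ, Ne.symm hcβ⟩

end Extension

end

/-- A 4-cycle `x–u–y–v` with `d(u) = d(v) = 2`, `d(x) = 3`, `N(x) = {u, v, p}`: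
any PCF coloring `φ` of `G - v` extends to `G`; indeed coloring `v` with any color
of `L(v)` avoiding `φ(x)`, `φ(y)` and a uniquely-occurring color `β` at `y` works. -/
theorem stmt14 {V : Type*} [Fintype V] [DecidableEq V] (G : SimpleGraph V)
    [DecidableRel G.Adj] (x u y v p : V) (L : V → Finset ℕ) (φ : V → ℕ)
    (hxu : G.Adj x u) (huy : G.Adj u y) (hyv : G.Adj y v) (hvx : G.Adj v x)
    (hxp : G.Adj x p) (hpu : p ≠ u) (hpv : p ≠ v) (hxy : x ≠ y) (huv : u ≠ v)
    (hdu : G.degree u = 2) (hdv : G.degree v = 2) (hdx : G.degree x = 3)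
    (hL : ∀ z, (L z).card = G.degree z + 2)
    (hφ : IsPCF (delVerts G {v}) φ)
    (hφL : ∀ z, z ≠ v → φ z ∈ L z) :
    (∃ ψ : V → ℕ, (∀ z, z ≠ v → ψ z = φ z) ∧ IsPCFList G L ψ) ∧
    (∀ β c : ℕ, β ∈ Uset (delVerts G {v}) φ y → c ∈ L v →
      c ≠ φ x → c ≠ φ y → c ≠ β →
      IsPCFList G L (Function.update φ v c)) := by
  have hNv := adj_iff_of_degree_eq_two hvx hyv.symm hxy hdv
  have hNu := adj_iff_of_degree_eq_two hxu.symm huy hxy hdu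
  have hNx := adj_iff_of_degree_eq_three hxu hvx.symm hxp huv hpu.symm hpv.symm hdx
  have hNu' : ∀ z, (delVerts G {v}).Adj u z ↔ z = x ∨ z = y := fun z => by
    rw [delVerts_singleton_adj_iff huv, hNu]
    grind [hvx.ne', hyv.ne]
  have hNx' : ∀ z, (delVerts G {v}).Adj x z ↔ z = u ∨ z = p := fun z => by
    rw [delVerts_singleton_adj_iff hvx.ne', hNx]
    grind
  have hφxy : φ x ≠ φ y :=
    ne_of_adj_iff_of_uset_nonempty hNu' hxy (hφ.2 u ⟨x, (hNu' x).2 (.inl rfl)⟩)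
  have extend : ∀ β c : ℕ, β ∈ Uset (delVerts G {v}) φ y → c ∈ L v →
      c ≠ φ x → c ≠ φ y → c ≠ β → IsPCFList G L (update φ v c) :=
    fun β c => isPCFList_update_of_adj_iff hφ hφL hNv hNx' hpu.symm hφxy
  refine ⟨?_, extend⟩
  obtain ⟨β, hβ⟩ := hφ.2 y ⟨u, (hNu' y).2 (.inr rfl) |>.symm⟩
  obtain ⟨c, hcL, hc⟩ := Finset.exists_mem_notMem_of_card_lt_card (s := {φ x, φ y, β})
    (t := L v) (Finset.card_le_three.trans_lt (by rw [hL, hdv]; norm_num))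
  simp only [Finset.mem_insert, Finset.mem_singleton, not_or] at hc
  exact ⟨_, fun z hz => update_of_ne hz c φ, extend β c hβ hcL hc.1 hc.2.1 hc.2.2⟩
end

section
/- Every outer-1-planar graph is proper conflict-free (degree+3)-choosable: for any list assignment L with |L(v)| = d(v) + 3 for every vertex v, there exists a proper conflict-free L-coloring. Moreover the bound is sharp, since C5 (which is outer-1-planar) is not proper conflict-free (degree+2)-choosable. -/
/-- With the vertices placed on a circle at positions `p` (listed along the circle),
the chords `e` and `f` cross with the endpoints of `e` and `f` interleaving as
`a < c < b < d`. -/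
def ChordCross {V : Type*} (p : V → ℕ) (e f : Sym2 V) : Prop :=
  ∃ a b c d : V, e = s(a, b) ∧ f = s(c, d) ∧ p a < p c ∧ p c < p b ∧ p b < p d

/-- The chords `e, f` cross: their endpoints interleave along the circle. -/
def Crosses {V : Type*} (p : V → ℕ) (e f : Sym2 V) : Prop :=
  ChordCross p e f ∨ ChordCross p f e

/-- `G` is outer-1-planar: it has a drawing with all vertices on the outer face
(i.e. on a circle, edges drawn as chords) in which every edge is crossed at most
once. -/
def OuterOnePlanar {V : Type*} (G : SimpleGraph V) : Prop :=
  ∃ p : V → ℕ, Function.Injective p ∧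
    ∀ e ∈ G.edgeSet, {f | f ∈ G.edgeSet ∧ Crosses p e f}.Subsingleton

/-!
Color the vertices greedily along an order `ρ`, giving `u` a color of `L u` that differs from
the colors of its earlier neighbours and of the earliest neighbours of its neighbours. The
earliest neighbour of `v` then has a color that no other neighbour of `v` uses, so the coloring
is proper conflict-free, and it exists as soon as every `u` has at most `deg u + 2` such
constraints.

Such an order exists for outer-1-planar graphs. Call `z` reducible if all but at most two of
its neighbours `v` satisfy `N[v] ⊆ N[z]`. Ordering `G` minus the edges at `z` by induction and
putting `z` last, the constraints of `z` are its neighbours and at most two more vertices, and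
a neighbour of `z` gains one edge and one constraint, the earliest neighbour of `z`.
A reducible vertex exists: if every non-isolated vertex has degree at least 3, take a region
`(a, b)` of the drawing that no edge leaves, and in it an innermost chord `xy` enclosing some
vertex. All vertices inside `xy` need an edge leaving it, and these edges cross `xy`, so there
is a single such vertex `u`, of degree 3, and its third edge `uv` is crossed only by `xy`. If no
vertex lies between `v` and the near end `x` of `xy`, then `N(x) = {v, u, y}` and `x` dominates
`u`; otherwise no edge leaves the region `(v, x)`, which is smaller, and we recurse.
-/

open Finset Function OrderDual

theorem exists_forall_mem_forall_ne {V : Type*} (ρ : V → ℕ) (D : V → Finset V)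
    (L : V → Finset ℕ) (hD : ∀ u, ∀ x ∈ D u, ρ x < ρ u) (hL : ∀ u, #(D u) < #(L u)) :
    ∃ φ : V → ℕ, ∀ u, φ u ∈ L u ∧ ∀ x ∈ D u, φ u ≠ φ x := by
  have hfree : ∀ u (g : D u → ℕ), (L u \ (D u).attach.image g).Nonempty := fun u g => by
    obtain ⟨c, hc, hcg⟩ := exists_mem_notMem_of_card_lt_card
      ((card_image_le.trans card_attach.le).trans_lt (hL u))
    exact ⟨c, mem_sdiff.2 ⟨hc, hcg⟩⟩
  have hwf : WellFounded fun a b : V => ρ a < ρ b := InvImage.wf ρ wellFounded_lt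
  let φ : V → ℕ := hwf.fix fun u ih =>
    (L u \ (D u).attach.image fun x => ih x.1 (hD u x.1 x.2)).min' (hfree u _)
  have hφ : ∀ u, φ u ∈ L u \ (D u).attach.image fun x => φ x.1 := fun u => by
    rw [show φ u = _ from WellFounded.fix_eq _ _ u]
    exact min'_mem _ _
  refine ⟨φ, fun u => ⟨(mem_sdiff.1 (hφ u)).1, fun x hx h => (mem_sdiff.1 (hφ u)).2 ?_⟩⟩
  exact mem_image.2 ⟨⟨x, hx⟩, mem_attach _ _, h.symm⟩

namespace SimpleGraph

section Greedy

variable {V : Type*} [Fintype V] (G : SimpleGraph V) [DecidableRel G.Adj] (ρ : V → ℕ)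

/-- The `ρ`-earliest neighbour of `v`; junk value `v` if `v` is isolated. -/
noncomputable def minNbr (v : V) : V :=
  if h : (G.neighborFinset v).Nonempty then (exists_min_image _ ρ h).choose else v

variable {G ρ}

lemma minNbr_mem {v : V} (h : (G.neighborFinset v).Nonempty) :
    G.minNbr ρ v ∈ G.neighborFinset v := by
  rw [minNbr, dif_pos h]
  exact (exists_min_image _ ρ h).choose_spec.1

lemma minNbr_le {u v : V} (hu : u ∈ G.neighborFinset v) : ρ (G.minNbr ρ v) ≤ ρ u := by
  have h : (G.neighborFinset v).Nonempty := ⟨u, hu⟩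
  rw [minNbr, dif_pos h]
  exact (exists_min_image _ ρ h).choose_spec.2 u hu

lemma minNbr_eq_of_forall_le (hρ : Injective ρ) {v m : V} (hm : m ∈ G.neighborFinset v)
    (hmin : ∀ u ∈ G.neighborFinset v, ρ m ≤ ρ u) : G.minNbr ρ v = m :=
  hρ ((minNbr_le hm).antisymm (hmin _ (minNbr_mem ⟨m, hm⟩)))

variable (G ρ) [DecidableEq V]

noncomputable def forbidden (u : V) : Finset V :=
  {x ∈ G.neighborFinset u | ρ x < ρ u} ∪ ((G.neighborFinset u).image (G.minNbr ρ)).erase u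

variable {G ρ}

lemma mem_forbidden {u x : V} :
    x ∈ G.forbidden ρ u ↔
      (G.Adj u x ∧ ρ x < ρ u) ∨ (x ≠ u ∧ ∃ v, G.Adj u v ∧ G.minNbr ρ v = x) := by
  simp [forbidden]

lemma lt_of_mem_forbidden (hρ : Injective ρ) {u x : V} (hx : x ∈ G.forbidden ρ u) :
    ρ x < ρ u := by
  rcases mem_forbidden.1 hx with ⟨-, h⟩ | ⟨hxu, v, huv, rfl⟩
  · exact h
  · exact (minNbr_le ((mem_neighborFinset _ _ _).2 huv.symm)).lt_of_ne fun h => hxu (hρ h)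

lemma isPCF_of_forall_ne_forbidden {β : Type*} (hρ : Injective ρ) {φ : V → β}
    (hφ : ∀ u, ∀ x ∈ G.forbidden ρ u, φ u ≠ φ x) : IsPCF G φ := by
  refine ⟨fun a b hab => ?_, fun v ⟨w, hvw⟩ => ?_⟩
  · rcases lt_trichotomy (ρ a) (ρ b) with h | h | h
    · exact (hφ b a (mem_forbidden.2 (Or.inl ⟨hab.symm, h⟩))).symm
    · exact absurd (hρ h) hab.ne
    · exact hφ a b (mem_forbidden.2 (Or.inl ⟨hab, h⟩))
  · have hm := (mem_neighborFinset _ _ _).1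
      (minNbr_mem (ρ := ρ) ⟨w, (mem_neighborFinset _ _ _).2 hvw⟩)
    refine ⟨φ (G.minNbr ρ v), G.minNbr ρ v, ⟨hm, rfl⟩, fun u ⟨hvu, hφu⟩ => ?_⟩
    by_contra hne
    exact hφ u _ (mem_forbidden.2 (Or.inr ⟨Ne.symm hne, v, hvu.symm, rfl⟩)) hφu

theorem exists_isPCFList_of_card_forbidden_lt (hρ : Injective ρ) (L : V → Finset ℕ)
    (hL : ∀ u, #(G.forbidden ρ u) < #(L u)) : ∃ φ, IsPCFList G L φ := by
  obtain ⟨φ, hφ⟩ := exists_forall_mem_forall_ne ρ (G.forbidden ρ) L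
    (fun _ _ => lt_of_mem_forbidden hρ) hL
  exact ⟨φ, fun u => (hφ u).1, isPCF_of_forall_ne_forbidden hρ fun u => (hφ u).2⟩

end Greedy

section Reducible

variable {V : Type*} [Fintype V] [DecidableEq V] (G : SimpleGraph V) [DecidableRel G.Adj]

/-- The neighbours `v` of `z` with `N[v] ⊄ N[z]`. -/
def nonDominatedNbrs (z : V) : Finset V :=
  {v ∈ G.neighborFinset z | ¬ G.neighborFinset v ⊆ insert z (G.neighborFinset z)}

def IsReducible (z : V) : Prop :=
  0 < G.degree z ∧ #(G.nonDominatedNbrs z) ≤ 2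

variable {G} {ρ ρ' : V → ℕ} {z : V}

lemma card_nonDominatedNbrs_le : #(G.nonDominatedNbrs z) ≤ G.degree z :=
  card_filter_le _ _

lemma isReducible_of_degree_le_two (h0 : 0 < G.degree z) (h2 : G.degree z ≤ 2) :
    G.IsReducible z :=
  ⟨h0, card_nonDominatedNbrs_le.trans h2⟩

lemma isReducible_of_dominates {u : V} (hz : G.degree z ≤ 3) (hzu : G.Adj z u)
    (hdom : G.neighborFinset u ⊆ insert z (G.neighborFinset z)) : G.IsReducible z := by
  refine ⟨(G.degree_pos_iff_exists_adj _).2 ⟨u, hzu⟩, ?_⟩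
  have hsub : G.nonDominatedNbrs z ⊆ (G.neighborFinset z).erase u := fun v hv => by
    obtain ⟨hv, hnd⟩ := mem_filter.1 hv
    exact mem_erase.2 ⟨fun h => hnd (h ▸ hdom), hv⟩
  have := card_le_card hsub
  rw [card_erase_of_mem ((mem_neighborFinset _ _ _).2 hzu), card_neighborFinset_eq_degree] at this
  omega

lemma forbidden_subset (ρ : V → ℕ) (z : V) :
    G.forbidden ρ z ⊆ G.neighborFinset z ∪ (G.nonDominatedNbrs z).image (G.minNbr ρ) := by
  intro t ht
  rcases mem_forbidden.1 ht with ⟨hzt, -⟩ | ⟨htz, v, hzv, rfl⟩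
  · exact mem_union_left _ ((mem_neighborFinset _ _ _).2 hzt)
  by_cases hdom : G.neighborFinset v ⊆ insert z (G.neighborFinset z)
  · have := hdom (minNbr_mem (ρ := ρ) ⟨z, (mem_neighborFinset _ _ _).2 hzv.symm⟩)
    exact mem_union_left _ ((mem_insert.1 this).resolve_left htz)
  · exact mem_union_right _
      (mem_image_of_mem _ (mem_filter.2 ⟨(mem_neighborFinset _ _ _).2 hzv, hdom⟩))

lemma card_forbidden_le (ρ : V → ℕ) (z : V) :
    #(G.forbidden ρ z) ≤ G.degree z + #(G.nonDominatedNbrs z) :=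
  (card_le_card (forbidden_subset ρ z)).trans ((card_union_le _ _).trans
    (Nat.add_le_add_left card_image_le _))

lemma neighborFinset_deleteIncidenceSet {v : V} (hv : v ≠ z) :
    (G.deleteIncidenceSet z).neighborFinset v = (G.neighborFinset v).erase z := by
  ext t
  simp [deleteIncidenceSet_adj, hv, and_comm]

lemma minNbr_deleteIncidenceSet (hρ : Injective ρ) (hzlast : ∀ v ≠ z, ρ v < ρ z)
    (hρ' : ∀ v ≠ z, ρ v = ρ' v) {v : V} (hv : v ≠ z)
    (hne : ((G.deleteIncidenceSet z).neighborFinset v).Nonempty) :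
    G.minNbr ρ v = (G.deleteIncidenceSet z).minNbr ρ' v := by
  have hm := minNbr_mem (ρ := ρ') hne
  rw [neighborFinset_deleteIncidenceSet hv, mem_erase] at hm
  refine minNbr_eq_of_forall_le hρ hm.2 fun t ht => ?_
  by_cases htz : t = z
  · exact htz ▸ (hzlast _ hm.1).le
  · rw [hρ' _ hm.1, hρ' _ htz]
    exact minNbr_le (by rw [neighborFinset_deleteIncidenceSet hv]; exact mem_erase.2 ⟨htz, ht⟩)

lemma mem_forbidden_deleteIncidenceSet (hρ : Injective ρ) (hzlast : ∀ v ≠ z, ρ v < ρ z)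
    (hρ' : ∀ v ≠ z, ρ v = ρ' v) {u t : V} (hu : u ≠ z) (ht : t ∈ G.forbidden ρ u) :
    t ∈ (G.deleteIncidenceSet z).forbidden ρ' u ∨ (G.Adj u z ∧ t = G.minNbr ρ z) := by
  rcases mem_forbidden.1 ht with ⟨hut, hlt⟩ | ⟨htu, v, huv, rfl⟩
  · have htz : t ≠ z := fun h => (hzlast u hu).not_gt (h ▸ hlt)
    refine Or.inl (mem_forbidden.2 (Or.inl ⟨deleteIncidenceSet_adj.2 ⟨hut, hu, htz⟩, ?_⟩))
    rwa [← hρ' t htz, ← hρ' u hu]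
  by_cases hvz : v = z
  · exact Or.inr ⟨hvz ▸ huv, hvz ▸ rfl⟩
  have hne : ((G.deleteIncidenceSet z).neighborFinset v).Nonempty := by
    rw [neighborFinset_deleteIncidenceSet hvz]
    exact ⟨u, mem_erase.2 ⟨hu, (mem_neighborFinset _ _ _).2 huv.symm⟩⟩
  refine Or.inl (mem_forbidden.2 (Or.inr ⟨htu, v, deleteIncidenceSet_adj.2 ⟨huv, hu, hvz⟩, ?_⟩))
  exact (minNbr_deleteIncidenceSet hρ hzlast hρ' hvz hne).symm

lemma card_forbidden_le_of_deleteIncidenceSet (hρ : Injective ρ) (hzlast : ∀ v ≠ z, ρ v < ρ z)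
    (hρ' : ∀ v ≠ z, ρ v = ρ' v) {u : V} (hu : u ≠ z)
    (hgood : #((G.deleteIncidenceSet z).forbidden ρ' u) ≤ (G.deleteIncidenceSet z).degree u + 2) :
    #(G.forbidden ρ u) ≤ G.degree u + 2 := by
  rw [← card_neighborFinset_eq_degree, neighborFinset_deleteIncidenceSet hu] at hgood
  rw [← card_neighborFinset_eq_degree]
  by_cases huz : G.Adj u z
  · have hsub : G.forbidden ρ u ⊆
        insert (G.minNbr ρ z) ((G.deleteIncidenceSet z).forbidden ρ' u) := fun t ht => by
      rcases mem_forbidden_deleteIncidenceSet hρ hzlast hρ' hu ht with h | ⟨-, rfl⟩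
      exacts [mem_insert_of_mem h, mem_insert_self _ _]
    have h1 := (card_le_card hsub).trans (card_insert_le _ _)
    have h2 := card_erase_add_one ((mem_neighborFinset _ _ _).2 huz)
    omega
  · have hsub : G.forbidden ρ u ⊆ (G.deleteIncidenceSet z).forbidden ρ' u := fun t ht =>
      (mem_forbidden_deleteIncidenceSet hρ hzlast hρ' hu ht).resolve_right fun h => huz h.1
    rw [erase_eq_of_notMem (by simpa using huz)] at hgood
    exact (card_le_card hsub).trans hgood

end Reducible

section Drawing

variable {V α : Type*} [LinearOrder α]

/-- The chord `cd` crosses the chord `ab` drawn with `p a < p b`, entering it at `c`. -/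
def CrossesAt (p : V → α) (a b c d : V) : Prop :=
  p a < p c ∧ p c < p b ∧ (p d < p a ∨ p b < p d)

def OneCrossing (G : SimpleGraph V) (p : V → α) : Prop :=
  ∀ ⦃a b c d c' d' : V⦄, G.Adj a b → G.Adj c d → G.Adj c' d' →
    CrossesAt p a b c d → CrossesAt p a b c' d' → c = c' ∧ d = d'

lemma crossesAt_toDual {p : V → α} {a b c d : V} :
    CrossesAt (toDual ∘ p) b a c d ↔ CrossesAt p a b c d := by
  simp only [CrossesAt, comp_apply, toDual_lt_toDual]
  tauto

lemma OneCrossing.dual {G : SimpleGraph V} {p : V → α} (h : OneCrossing G p) :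
    OneCrossing G (toDual ∘ p) :=
  fun _ _ _ _ _ _ hab hcd hcd' hc hc' =>
    h hab.symm hcd hcd' (crossesAt_toDual.1 hc) (crossesAt_toDual.1 hc')

lemma _root_.OuterOnePlanar.mono {V : Type*} {G H : SimpleGraph V} (hG : OuterOnePlanar G)
    (hle : H ≤ G) : OuterOnePlanar H := by
  obtain ⟨p, hp, hsub⟩ := hG
  exact ⟨p, hp, fun e he f hf g hg => hsub e (edgeSet_mono hle he)
    ⟨edgeSet_mono hle hf.1, hf.2⟩ ⟨edgeSet_mono hle hg.1, hg.2⟩⟩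

lemma _root_.OuterOnePlanar.exists_oneCrossing {G : SimpleGraph V} (hG : OuterOnePlanar G) :
    ∃ p : V → ℕ, Injective p ∧ OneCrossing G p := by
  obtain ⟨p, hp, hsub⟩ := hG
  have crosses : ∀ {a b c d}, CrossesAt p a b c d → Crosses p s(a, b) s(c, d) := by
    rintro a b c d ⟨hac, hcb, hd | hd⟩
    · exact Or.inr ⟨d, c, a, b, Sym2.eq_swap, rfl, hd, hac, hcb⟩
    · exact Or.inl ⟨a, b, c, d, rfl, rfl, hac, hcb, hd⟩
  refine ⟨p, hp, fun a b c d c' d' hab hcd hcd' h h' => ?_⟩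
  rcases Sym2.eq_iff.1 (hsub _ hab ⟨hcd, crosses h⟩ ⟨hcd', crosses h'⟩) with hc | ⟨rfl, rfl⟩
  · exact hc
  · obtain ⟨h1, h2, -⟩ := h'
    obtain ⟨-, -, h3 | h3⟩ := h <;> omega

variable [Fintype V] (G : SimpleGraph V) [DecidableRel G.Adj] (p : V → α)

def innerVerts (a b : V) : Finset V :=
  {w | 0 < G.degree w ∧ p a < p w ∧ p w < p b}

def IsClosedRegion (a b : V) : Prop :=
  (G.innerVerts p a b).Nonempty ∧ ∀ w ∈ G.innerVerts p a b, ∀ t, G.Adj w t → p a ≤ p t ∧ p t ≤ p b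

def IsInnermost (x y : V) : Prop :=
  G.Adj x y ∧ (G.innerVerts p x y).Nonempty ∧
    ∀ ⦃t t'⦄, G.Adj t t' → p x ≤ p t → p t < p t' → p t' ≤ p y → (t ≠ x ∨ t' ≠ y) →
      G.innerVerts p t t' = ∅

variable {G p} {a b c d x y u v w : V}

lemma mem_innerVerts : w ∈ G.innerVerts p a b ↔ 0 < G.degree w ∧ p a < p w ∧ p w < p b := by
  simp [innerVerts]

lemma mem_innerVerts_of_adj {t : V} (hwt : G.Adj w t) (haw : p a < p w) (hwb : p w < p b) :
    w ∈ G.innerVerts p a b :=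
  mem_innerVerts.2 ⟨(G.degree_pos_iff_exists_adj _).2 ⟨t, hwt⟩, haw, hwb⟩

lemma innerVerts_toDual : G.innerVerts (toDual ∘ p) b a = G.innerVerts p a b := by
  ext w
  simp only [mem_innerVerts, comp_apply, toDual_lt_toDual]
  tauto

lemma isClosedRegion_toDual : G.IsClosedRegion (toDual ∘ p) b a ↔ G.IsClosedRegion p a b := by
  simp only [IsClosedRegion, innerVerts_toDual, comp_apply, toDual_le_toDual]
  exact and_congr_right' (forall₄_congr fun _ _ _ _ => and_comm)

lemma innerVerts_subset_innerVerts (hac : p a ≤ p c) (hdb : p d ≤ p b) :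
    G.innerVerts p c d ⊆ G.innerVerts p a b := fun w hw => by
  obtain ⟨h0, h1, h2⟩ := mem_innerVerts.1 hw
  exact mem_innerVerts.2 ⟨h0, by order, by order⟩

lemma card_innerVerts_lt_card_innerVerts (hac : p a ≤ p c) (hdb : p d ≤ p b)
    (hu : u ∈ G.innerVerts p a b) (hu' : u ∉ G.innerVerts p c d) :
    #(G.innerVerts p c d) < #(G.innerVerts p a b) :=
  card_lt_card ((ssubset_iff_of_subset (innerVerts_subset_innerVerts hac hdb)).2 ⟨u, hu, hu'⟩)

lemma innerVerts_ssubset_innerVerts (hp : Injective p) {t t' : V} (htt' : G.Adj t t')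
    (hxt : p x ≤ p t) (hlt : p t < p t') (hty : p t' ≤ p y) (hne : t ≠ x ∨ t' ≠ y) :
    G.innerVerts p t t' ⊂ G.innerVerts p x y := by
  refine (ssubset_iff_of_subset (innerVerts_subset_innerVerts hxt hty)).2 ?_
  rcases hne with hne | hne
  · exact ⟨t, mem_innerVerts_of_adj htt' (hxt.lt_of_ne (hp.ne hne.symm)) (by order),
      fun h => (mem_innerVerts.1 h).2.1.false⟩
  · exact ⟨t', mem_innerVerts_of_adj htt'.symm (by order) (hty.lt_of_ne (hp.ne hne)),
      fun h => (mem_innerVerts.1 h).2.2.false⟩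

lemma exists_adj_adj_lt_of_three_le_degree (hp : Injective p) (hw : 3 ≤ G.degree w) :
    ∃ t₁ t₂, G.Adj w t₁ ∧ G.Adj w t₂ ∧ p t₁ < p t₂ ∧ (p t₂ < p w ∨ p w < p t₁) := by
  classical
  by_contra! h
  have hle : ∀ t ∈ G.neighborFinset w, ∀ t' ∈ G.neighborFinset w, p t < p t' →
      p t ≤ p w ∧ p w ≤ p t' := fun t ht t' ht' hlt =>
    (h t t' ((mem_neighborFinset _ _ _).1 ht) ((mem_neighborFinset _ _ _).1 ht') hlt).symm
  have hlow : #{t ∈ G.neighborFinset w | p t < p w} ≤ 1 := card_le_one.2 fun t ht t' ht' => by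
    rw [mem_filter] at ht ht'
    by_contra hne
    rcases (hp.ne hne).lt_or_gt with hlt | hlt
    · exact (hle t ht.1 t' ht'.1 hlt).2.not_gt ht'.2
    · exact (hle t' ht'.1 t ht.1 hlt).2.not_gt ht.2
  have hhigh : #{t ∈ G.neighborFinset w | p w < p t} ≤ 1 := card_le_one.2 fun t ht t' ht' => by
    rw [mem_filter] at ht ht'
    by_contra hne
    rcases (hp.ne hne).lt_or_gt with hlt | hlt
    · exact (hle t ht.1 t' ht'.1 hlt).1.not_gt ht.2
    · exact (hle t' ht'.1 t ht.1 hlt).1.not_gt ht'.2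
  have hsplit : G.neighborFinset w ⊆
      {t ∈ G.neighborFinset w | p t < p w} ∪ {t ∈ G.neighborFinset w | p w < p t} := by
    intro t ht
    have hne : p t ≠ p w := hp.ne (G.ne_of_adj ((mem_neighborFinset _ _ _).1 ht)).symm
    rcases hne.lt_or_gt with hlt | hlt <;> simp [ht, hlt]
  have := (card_le_card hsplit).trans (card_union_le _ _)
  rw [card_neighborFinset_eq_degree] at this
  omega

lemma exists_isClosedRegion (hp : Injective p) (hdeg : ∀ v, 0 < G.degree v → 3 ≤ G.degree v)
    (hab : G.Adj a b) : ∃ c d, G.IsClosedRegion p c d := by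
  have hS : ({w | 0 < G.degree w} : Finset V).Nonempty :=
    ⟨a, by simpa using (G.degree_pos_iff_exists_adj _).2 ⟨b, hab⟩⟩
  obtain ⟨l, hlS, hl⟩ := exists_min_image _ p hS
  obtain ⟨r, hrS, hr⟩ := exists_max_image _ p hS
  have hbound : ∀ w t, G.Adj w t → p l ≤ p t ∧ p t ≤ p r := fun w t hwt =>
    have ht : t ∈ ({w | 0 < G.degree w} : Finset V) := by
      simpa using (G.degree_pos_iff_exists_adj _).2 ⟨w, hwt.symm⟩
    ⟨hl t ht, hr t ht⟩
  refine ⟨l, r, ?_, fun w _ t hwt => hbound w t hwt⟩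
  obtain ⟨t₁, t₂, h₁, h₂, h12, hside⟩ :=
    exists_adj_adj_lt_of_three_le_degree hp (hdeg l (by simpa using hlS))
  have := hbound _ _ h₁
  have := hbound _ _ h₂
  have hlt₁ : p l < p t₁ := hside.resolve_left (by order)
  exact ⟨t₁, mem_innerVerts_of_adj h₁.symm hlt₁ (by order)⟩

lemma exists_isInnermost (hp : Injective p) (hdeg : ∀ v, 0 < G.degree v → 3 ≤ G.degree v)
    (hR : G.IsClosedRegion p a b) : ∃ x y, p a ≤ p x ∧ p y ≤ p b ∧ G.IsInnermost p x y := by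
  classical
  let P : Finset (V × V) := {q | G.Adj q.1 q.2 ∧ p a ≤ p q.1 ∧ p q.1 < p q.2 ∧ p q.2 ≤ p b ∧
    (G.innerVerts p q.1 q.2).Nonempty}
  have hP : ∀ {t t'}, G.Adj t t' → p a ≤ p t → p t < p t' → p t' ≤ p b →
      (G.innerVerts p t t').Nonempty → (t, t') ∈ P := by
    intro t t' h1 h2 h3 h4 h5
    simp only [P, mem_filter, mem_univ, true_and]
    exact ⟨h1, h2, h3, h4, h5⟩
  have hPne : P.Nonempty := by
    obtain ⟨w, hw⟩ := hR.1
    obtain ⟨hwdeg, haw, hwb⟩ := mem_innerVerts.1 hw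
    obtain ⟨t₁, t₂, h₁, h₂, h12, hside⟩ := exists_adj_adj_lt_of_three_le_degree hp (hdeg w hwdeg)
    have b₁ := hR.2 w hw t₁ h₁
    have b₂ := hR.2 w hw t₂ h₂
    rcases hside with h2w | hw1
    · exact ⟨_, hP h₁.symm b₁.1 (h12.trans h2w) hwb.le ⟨t₂, mem_innerVerts_of_adj h₂.symm h12 h2w⟩⟩
    · exact ⟨_, hP h₂ haw.le (hw1.trans h12) b₂.2 ⟨t₁, mem_innerVerts_of_adj h₁.symm hw1 h12⟩⟩
  obtain ⟨⟨x, y⟩, hq, hmin⟩ := exists_min_image P (fun q => #(G.innerVerts p q.1 q.2)) hPne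
  simp only [P, mem_filter, mem_univ, true_and] at hq
  obtain ⟨hxy, hax, hlt, hyb, hne⟩ := hq
  refine ⟨x, y, hax, hyb, hxy, hne, fun t t' htt' hxt htt hty hne' => ?_⟩
  by_contra hempty
  have hsmall := hmin _ (hP htt' (hax.trans hxt) htt (hty.trans hyb)
    (nonempty_iff_ne_empty.2 hempty))
  exact (card_lt_card (innerVerts_ssubset_innerVerts hp htt' hxt htt hty hne')).not_ge hsmall

lemma IsInnermost.exists_adj_outside (hp : Injective p)
    (hdeg : ∀ v, 0 < G.degree v → 3 ≤ G.degree v) (h : G.IsInnermost p x y)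
    (hw : w ∈ G.innerVerts p x y) : ∃ t, G.Adj w t ∧ (p t < p x ∨ p y < p t) := by
  by_contra! hin
  obtain ⟨hwdeg, hxw, hwy⟩ := mem_innerVerts.1 hw
  obtain ⟨t₁, t₂, h₁, h₂, h12, hside⟩ := exists_adj_adj_lt_of_three_le_degree hp (hdeg w hwdeg)
  rcases hside with h2w | hw1
  · have := h.2.2 h₁.symm (hin t₁ h₁).1 (h12.trans h2w) hwy.le (Or.inr (ne_of_apply_ne p hwy.ne))
    exact notMem_empty t₂ (this ▸ mem_innerVerts_of_adj h₂.symm h12 h2w)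
  · have := h.2.2 h₂ hxw.le (hw1.trans h12) (hin t₂ h₂).2 (Or.inl (ne_of_apply_ne p hxw.ne'))
    exact notMem_empty t₁ (this ▸ mem_innerVerts_of_adj h₁.symm hw1 h12)

lemma IsInnermost.exists_innerVerts_eq_singleton (hp : Injective p) (hone : OneCrossing G p)
    (hdeg : ∀ v, 0 < G.degree v → 3 ≤ G.degree v) (h : G.IsInnermost p x y) :
    ∃ u v, G.innerVerts p x y = {u} ∧ G.Adj u x ∧ G.Adj u y ∧ G.Adj u v ∧
      (p v < p x ∨ p y < p v) ∧ ∀ t, G.Adj u t → t = x ∨ t = y ∨ t = v := by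
  classical
  obtain ⟨u, hu⟩ := h.2.1
  obtain ⟨v, huv, hv⟩ := h.exists_adj_outside hp hdeg hu
  obtain ⟨hudeg, hxu, huy⟩ := mem_innerVerts.1 hu
  have huniq : ∀ w ∈ G.innerVerts p x y, ∀ t, G.Adj w t → (p t < p x ∨ p y < p t) →
      w = u ∧ t = v := fun w hw t hwt ht =>
    hone h.1 hwt huv ⟨(mem_innerVerts.1 hw).2.1, (mem_innerVerts.1 hw).2.2, ht⟩ ⟨hxu, huy, hv⟩
  have hinner : G.innerVerts p x y = {u} := eq_singleton_iff_unique_mem.2 ⟨hu, fun w hw =>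
    have ⟨t, hwt, ht⟩ := h.exists_adj_outside hp hdeg hw
    (huniq w hw t hwt ht).1⟩
  have hnbr : ∀ t, G.Adj u t → t = x ∨ t = y ∨ t = v := by
    intro t hut
    rcases lt_trichotomy (p t) (p x) with htx | htx | hxt
    · exact Or.inr (Or.inr (huniq u hu t hut (Or.inl htx)).2)
    · exact Or.inl (hp htx)
    rcases lt_trichotomy (p t) (p y) with hty | hty | hyt
    · have := hinner ▸ mem_innerVerts_of_adj hut.symm hxt hty
      exact absurd (mem_singleton.1 this) (G.ne_of_adj hut).symm
    · exact Or.inr (Or.inl (hp hty))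
    · exact Or.inr (Or.inr (huniq u hu t hut (Or.inr hyt)).2)
  have hN : G.neighborFinset u = {x, y, v} :=
    eq_of_subset_of_card_le (fun t ht => by simpa using hnbr t ((mem_neighborFinset _ _ _).1 ht))
      (card_le_three.trans (by rw [card_neighborFinset_eq_degree]; exact hdeg u hudeg))
  have hadj : ∀ t ∈ ({x, y, v} : Finset V), G.Adj u t := fun t ht =>
    (mem_neighborFinset _ _ _).1 (hN ▸ ht)
  exact ⟨u, v, hinner, hadj x (by simp), hadj y (by simp), huv, hv, hnbr⟩

lemma isClosedRegion_of_innerVerts_nonempty (hone : OneCrossing G p) (hxy : G.Adj x y) (hxu : p x < p u)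
    (huy : p u < p y) (hinner : G.innerVerts p x y = {u}) (huv : G.Adj u v) (hvx : p v < p x)
    (hJ : (G.innerVerts p v x).Nonempty) : G.IsClosedRegion p v x := by
  refine ⟨hJ, fun w hw t hwt => ?_⟩
  obtain ⟨-, hvw, hwx⟩ := mem_innerVerts.1 hw
  have hwx' : w ≠ x := ne_of_apply_ne p hwx.ne
  by_contra! hout
  rcases lt_or_ge (p t) (p v) with htv | hvt
  · exact hwx' (hone huv.symm hwt hxy ⟨hvw, by order, Or.inl htv⟩ ⟨hvx, hxu, Or.inr huy⟩).1
  have hxt := hout hvt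
  rcases le_or_gt (p t) (p u) with htu | hut
  · obtain rfl : t = u := mem_singleton.1 (hinner ▸ mem_innerVerts_of_adj hwt.symm hxt (by order))
    obtain ⟨-, rfl⟩ := hone hxy hwt.symm huv ⟨hxu, huy, Or.inl hwx⟩ ⟨hxu, huy, Or.inl hvx⟩
    exact hvw.false
  · exact hwx' (hone huv.symm hwt hxy ⟨hvw, by order, Or.inr hut⟩ ⟨hvx, hxu, Or.inr huy⟩).1

lemma isReducible_of_innerVerts_eq_empty [DecidableEq V] (hp : Injective p)
    (hone : OneCrossing G p) (hdeg : ∀ v, 0 < G.degree v → 3 ≤ G.degree v) (hxy : G.Adj x y)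
    (hxu : p x < p u) (huy : p u < p y) (hinner : G.innerVerts p x y = {u}) (hux : G.Adj u x)
    (huv : G.Adj u v) (hvx : p v < p x) (hnbr : ∀ t, G.Adj u t → t = x ∨ t = y ∨ t = v)
    (hJ : G.innerVerts p v x = ∅) : G.IsReducible x := by
  have hNx : G.neighborFinset x ⊆ {v, u, y} := fun t ht => by
    have hxt := (mem_neighborFinset _ _ _).1 ht
    have hcross := fun h => hone huv.symm hxt hxy h ⟨hvx, hxu, Or.inr huy⟩
    simp only [mem_insert, mem_singleton]
    rcases lt_trichotomy (p t) (p v) with htv | htv | hvt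
    · obtain ⟨-, rfl⟩ := hcross ⟨hvx, hxu, Or.inl htv⟩
      order
    · exact Or.inl (hp htv)
    rcases lt_trichotomy (p t) (p x) with htx | htx | hxt'
    · exact absurd (hJ ▸ mem_innerVerts_of_adj hxt.symm hvt htx) (notMem_empty t)
    · exact absurd (hp htx) (G.ne_of_adj hxt).symm
    rcases le_or_gt (p t) (p u) with htu | hut
    · exact Or.inr (Or.inl (mem_singleton.1 (hinner ▸ mem_innerVerts_of_adj hxt.symm hxt'
        (by order))))
    · exact Or.inr (Or.inr (hcross ⟨hvx, hxu, Or.inr hut⟩).2)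
  have hNx' : G.neighborFinset x = {v, u, y} := eq_of_subset_of_card_le hNx
    (card_le_three.trans (by
      rw [card_neighborFinset_eq_degree]
      exact hdeg x ((G.degree_pos_iff_exists_adj _).2 ⟨y, hxy⟩)))
  refine isReducible_of_dominates ?_ hux.symm fun t ht => ?_
  · rw [← card_neighborFinset_eq_degree, hNx']
    exact card_le_three
  · rw [hNx']
    rcases hnbr t ((mem_neighborFinset _ _ _).1 ht) with rfl | rfl | rfl <;> simp

lemma isReducible_or_isClosedRegion [DecidableEq V] (hp : Injective p) (hone : OneCrossing G p)
    (hdeg : ∀ v, 0 < G.degree v → 3 ≤ G.degree v) (hxy : G.Adj x y) (hxu : p x < p u)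
    (huy : p u < p y) (hinner : G.innerVerts p x y = {u}) (hux : G.Adj u x) (huv : G.Adj u v)
    (hvx : p v < p x) (hnbr : ∀ t, G.Adj u t → t = x ∨ t = y ∨ t = v) :
    G.IsReducible x ∨ G.IsClosedRegion p v x := by
  rcases (G.innerVerts p v x).eq_empty_or_nonempty with hJ | hJ
  · exact Or.inl (isReducible_of_innerVerts_eq_empty hp hone hdeg hxy hxu huy hinner hux huv hvx
      hnbr hJ)
  · exact Or.inr (isClosedRegion_of_innerVerts_nonempty hone hxy hxu huy hinner huv hvx hJ)

theorem exists_isReducible_of_isClosedRegion [DecidableEq V] (hp : Injective p)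
    (hone : OneCrossing G p) (hdeg : ∀ v, 0 < G.degree v → 3 ≤ G.degree v)
    (hR : G.IsClosedRegion p a b) : ∃ z, G.IsReducible z := by
  induction hn : #(G.innerVerts p a b) using Nat.strong_induction_on generalizing a b with
  | _ n ih =>
  obtain ⟨x, y, hax, hyb, hI⟩ := exists_isInnermost hp hdeg hR
  obtain ⟨u, v, hinner, hux, huy, huv, hv, hnbr⟩ := hI.exists_innerVerts_eq_singleton hp hone hdeg
  have hu : u ∈ G.innerVerts p x y := hinner ▸ mem_singleton_self u
  obtain ⟨-, hxu, huy'⟩ := mem_innerVerts.1 hu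
  have huab : u ∈ G.innerVerts p a b := mem_innerVerts_of_adj huv (by order) (by order)
  obtain ⟨hav, hvb⟩ := hR.2 u huab v huv
  have recurse : ∀ c d, p a ≤ p c → p d ≤ p b → (p u < p c ∨ p d < p u) →
      G.IsClosedRegion p c d → ∃ z, G.IsReducible z := fun c d hac hdb hout hR' =>
    ih _ (hn ▸ card_innerVerts_lt_card_innerVerts hac hdb huab fun h => by
      obtain ⟨-, h1, h2⟩ := mem_innerVerts.1 h
      rcases hout with h | h <;> order) hR' rfl
  rcases hv with hvx | hyv
  · refine (isReducible_or_isClosedRegion hp hone hdeg hI.1 hxu huy' hinner hux huv hvx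
      hnbr).elim (fun h => ⟨x, h⟩) (recurse v x hav (by order) (Or.inr hxu))
  · have hinner' : G.innerVerts (toDual ∘ p) y x = {u} := by rw [innerVerts_toDual, hinner]
    refine (isReducible_or_isClosedRegion (toDual.injective.comp hp) hone.dual hdeg hI.1.symm
      huy' hxu hinner' huy huv hyv fun t ht => ?_).elim (fun h => ⟨y, h⟩) fun h =>
        recurse y v (by order) hvb (Or.inl huy') (isClosedRegion_toDual.1 h)
    rcases hnbr t ht with h | h | h <;> simp [h]

theorem exists_isReducible [DecidableEq V] (hp : Injective p) (hone : OneCrossing G p)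
    (hab : G.Adj a b) : ∃ z, G.IsReducible z := by
  by_cases hsmall : ∃ z, 0 < G.degree z ∧ G.degree z ≤ 2
  · obtain ⟨z, h0, h2⟩ := hsmall
    exact ⟨z, isReducible_of_degree_le_two h0 h2⟩
  push Not at hsmall
  obtain ⟨c, d, hR⟩ := exists_isClosedRegion hp hsmall hab
  exact exists_isReducible_of_isClosedRegion hp hone hsmall hR

end Drawing

lemma exists_injective_update_last {V : Type*} [Fintype V] [DecidableEq V] {ρ' : V → ℕ}
    (hρ' : Injective ρ') (z : V) :
    ∃ ρ : V → ℕ, Injective ρ ∧ (∀ v ≠ z, ρ v < ρ z) ∧ ∀ v ≠ z, ρ v = ρ' v := by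
  have hlt : ∀ v, ρ' v < univ.sup ρ' + 1 := fun v => Nat.lt_succ_of_le (le_sup (mem_univ v))
  refine ⟨update ρ' z (univ.sup ρ' + 1), fun v w h => ?_, fun v hv => ?_,
    fun v hv => update_of_ne hv _ _⟩
  · by_cases hv : v = z <;> by_cases hw : w = z
    · rw [hv, hw]
    · rw [hv, update_self, update_of_ne hw] at h
      exact absurd h (hlt w).ne'
    · rw [hw, update_self, update_of_ne hv] at h
      exact absurd h (hlt v).ne
    · rw [update_of_ne hv, update_of_ne hw] at h
      exact hρ' h
  · rw [update_of_ne hv, update_self]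
    exact hlt v

theorem exists_good_order {V : Type*} [Fintype V] [DecidableEq V] (G : SimpleGraph V)
    [DecidableRel G.Adj] (hG : OuterOnePlanar G) :
    ∃ ρ : V → ℕ, Injective ρ ∧ ∀ u, #(G.forbidden ρ u) ≤ G.degree u + 2 := by
  induction hn : #G.edgeFinset using Nat.strong_induction_on generalizing G with
  | _ n ih =>
  by_cases hE : ∃ a b, G.Adj a b
  · obtain ⟨a, b, hab⟩ := hE
    obtain ⟨p, hp, hone⟩ := hG.exists_oneCrossing
    obtain ⟨z, hzdeg, hz⟩ := exists_isReducible hp hone hab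
    have hcard : #(G.deleteIncidenceSet z).edgeFinset < n := by
      have := card_pos.2 ⟨s(a, b), G.mem_edgeFinset.2 hab⟩
      rw [card_edgeFinset_deleteIncidenceSet]
      omega
    obtain ⟨ρ', hρ', hgood'⟩ := ih _ hcard _ (hG.mono (G.deleteIncidenceSet_le z)) rfl
    obtain ⟨ρ, hρ, hzlast, hρρ'⟩ := exists_injective_update_last hρ' z
    refine ⟨ρ, hρ, fun u => ?_⟩
    by_cases huz : u = z
    · subst huz
      exact (card_forbidden_le ρ u).trans (by omega)
    · exact card_forbidden_le_of_deleteIncidenceSet hρ hzlast hρρ' huz (hgood' u)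
  · push Not at hE
    refine ⟨fun v => Fintype.equivFin V v, Fin.val_injective.comp (Fintype.equivFin V).injective,
      fun u => (card_forbidden_le _ u).trans ?_⟩
    have : G.degree u = 0 := card_eq_zero.2 (by ext; simp [hE])
    have := card_nonDominatedNbrs_le (G := G) (z := u)
    omega

end SimpleGraph

lemma IsPCF.ne_of_forall_adj_iff {V β : Type*} {G : SimpleGraph V} {φ : V → β} (h : IsPCF G φ)
    {v a b : V} (hab : a ≠ b) (hN : ∀ w, G.Adj v w ↔ w = a ∨ w = b) : φ a ≠ φ b := by
  intro heq
  obtain ⟨c, u, ⟨hvu, hc⟩, huniq⟩ := h.2 v ⟨a, (hN a).2 (Or.inl rfl)⟩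
  have hca : φ a = c := by
    rcases (hN u).1 hvu with rfl | rfl
    exacts [hc, heq.trans hc]
  exact hab ((huniq a ⟨(hN a).2 (Or.inl rfl), hca⟩).trans
    (huniq b ⟨(hN b).2 (Or.inr rfl), heq.symm.trans hca⟩).symm)

lemma cyc5_adj_add_one : ∀ v : ZMod 5, (Cyc 5).Adj v (v + 1) := by decide

lemma cyc5_adj_add_one_iff : ∀ v w : ZMod 5, (Cyc 5).Adj (v + 1) w ↔ w = v ∨ w = v + 2 := by
  decide

lemma cyc5_degree : ∀ v : ZMod 5, (Cyc 5).degree v = 2 := by decide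

lemma outerOnePlanar_cyc5 : OuterOnePlanar (Cyc 5) := by
  have hval : ∀ a b : ZMod 5, (Cyc 5).Adj a b → b.val = a.val + 1 ∨ a.val = b.val + 1 ∨
      (a.val = 0 ∧ b.val = 4) ∨ (a.val = 4 ∧ b.val = 0) := by decide
  have hno : ∀ e ∈ (Cyc 5).edgeSet, ∀ f, ¬ ChordCross ZMod.val e f := by
    rintro e he f ⟨a, b, c, d, rfl, rfl, h1, h2, h3⟩
    have := d.val_lt
    have := hval a b he
    omega
  refine ⟨ZMod.val, ZMod.val_injective 5, fun e he f hf _ _ => ?_⟩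
  rcases hf.2 with h | h
  exacts [(hno e he f h).elim, (hno f hf.1 e h).elim]

lemma IsPCF.injective_cyc5 {β : Type*} {φ : ZMod 5 → β} (h : IsPCF (Cyc 5) φ) :
    Injective φ := by
  have hdist : ∀ a b : ZMod 5, a ≠ b → b = a + 1 ∨ a = b + 1 ∨ b = a + 2 ∨ a = b + 2 := by
    decide
  have h1 : ∀ v, φ v ≠ φ (v + 1) := fun v => h.1 (cyc5_adj_add_one v)
  have h2 : ∀ v, φ v ≠ φ (v + 2) := fun v =>
    h.ne_of_forall_adj_iff (by revert v; decide) (cyc5_adj_add_one_iff v)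
  intro x y hxy
  by_contra hne
  rcases hdist x y hne with rfl | rfl | rfl | rfl
  exacts [h1 x hxy, h1 y hxy.symm, h2 x hxy, h2 y hxy.symm]

lemma exists_not_isPCFList_cyc5 :
    ∃ L : ZMod 5 → Finset ℕ, (∀ v, #(L v) = (Cyc 5).degree v + 2) ∧
      ¬ ∃ φ : ZMod 5 → ℕ, IsPCFList (Cyc 5) L φ := by
  refine ⟨fun _ => range 4, fun v => by simp [cyc5_degree], fun ⟨φ, hL, hφ⟩ => ?_⟩
  have := card_le_card_of_injOn φ (s := univ) (fun v _ => hL v) hφ.injective_cyc5.injOn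
  simp at this

/-- Every outer-1-planar graph is proper conflict-free (degree+3)-choosable, and the
bound is sharp: `C₅` is outer-1-planar but not proper conflict-free
(degree+2)-choosable. -/
theorem stmt15 :
    (∀ (V : Type) [Fintype V] [DecidableEq V] (G : SimpleGraph V)
        [DecidableRel G.Adj], OuterOnePlanar G →
      ∀ L : V → Finset ℕ, (∀ v, (L v).card = G.degree v + 3) →
        ∃ φ : V → ℕ, IsPCFList G L φ) ∧
    (OuterOnePlanar (Cyc 5) ∧
      ∃ L : ZMod 5 → Finset ℕ, (∀ v, (L v).card = (Cyc 5).degree v + 2) ∧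
        ¬ ∃ φ : ZMod 5 → ℕ, IsPCFList (Cyc 5) L φ) := by
  refine ⟨fun V _ _ G _ hG L hL => ?_, outerOnePlanar_cyc5, exists_not_isPCFList_cyc5⟩
  obtain ⟨ρ, hρ, hgood⟩ := G.exists_good_order hG
  exact G.exists_isPCFList_of_card_forbidden_lt hρ L fun u => by
    have := hgood u
    have := hL u
    omega
end

section
/- Let G be a graph containing an edge u–v with d(u) = 2 and d(v) ≤ 3, and let N(u) = {v, p}. Let L be a list assignment with |L(z)| = d(z) + 3 for all z, and let φ be a proper conflict-free L-coloring of G − {u, v}. Then φ extends to a proper conflict-free L-coloring of G. -/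
/-- An edge `u–v` with `d(u) = 2`, `d(v) ≤ 3`, `N(u) = {v, p}`: any PCF coloring of
`G - {u, v}` from lists of size degree + 3 extends to a PCF coloring of `G`. -/
theorem stmt16 {V : Type*} [Fintype V] [DecidableEq V] (G : SimpleGraph V)
    [DecidableRel G.Adj] (u v p : V) (L : V → Finset ℕ) (φ : V → ℕ)
    (huv : G.Adj u v) (hup : G.Adj u p) (hpv : p ≠ v)
    (hdu : G.degree u = 2) (hdv : G.degree v ≤ 3)
    (hL : ∀ z, (L z).card = G.degree z + 3)
    (hφ : IsPCF (delVerts G {u, v}) φ)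
    (hφL : ∀ z, z ∉ ({u, v} : Set V) → φ z ∈ L z) :
    ∃ ψ : V → ℕ, (∀ z, z ∉ ({u, v} : Set V) → ψ z = φ z) ∧ IsPCFList G L ψ := by
  classical
  set D := delVerts G ({u, v} : Set V) with hD
  have hDadj : ∀ a b : V, D.Adj a b ↔
      G.Adj a b ∧ (a ≠ u ∧ a ≠ v) ∧ (b ≠ u ∧ b ≠ v) := by
    intro a b
    simp only [hD, delVerts, Set.mem_insert_iff, Set.mem_singleton_iff]
    constructor
    · rintro ⟨h1, h2, h3⟩; push_neg at h2 h3; exact ⟨h1, h2, h3⟩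
    · rintro ⟨h1, h2, h3⟩; exact ⟨h1, by push_neg; exact h2, by push_neg; exact h3⟩
  have huv' : u ≠ v := G.ne_of_adj huv
  have hup' : u ≠ p := G.ne_of_adj hup
  -- neighbors of u are exactly v and p
  have hNu : ∀ w, G.Adj u w → w = v ∨ w = p := by
    intro w hw
    by_contra hcon
    push_neg at hcon
    have hsub : ({v, p, w} : Finset V) ⊆ G.neighborFinset u := by
      intro x hx
      simp only [Finset.mem_insert, Finset.mem_singleton] at hx
      rcases hx with rfl | rfl | rfl <;>
        simp [SimpleGraph.mem_neighborFinset, huv, hup, hw]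
    have hcard : ({v, p, w} : Finset V).card = 3 := by
      rw [Finset.card_insert_of_notMem (by
          simp only [Finset.mem_insert, Finset.mem_singleton]
          push_neg
          exact ⟨Ne.symm hpv, Ne.symm hcon.1⟩),
        Finset.card_insert_of_notMem (by
          simp only [Finset.mem_singleton]
          exact Ne.symm hcon.2)]
      simp
    have hle := Finset.card_le_card hsub
    rw [hcard, SimpleGraph.card_neighborFinset_eq_degree, hdu] at hle
    omega
  -- unique-occurring colors in D
  have key : ∀ z : V, ∃ c : ℕ,
      (∃ w, D.Adj z w) → ∃! w, D.Adj z w ∧ φ w = c := by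
    intro z
    by_cases h : ∃ w, D.Adj z w
    · obtain ⟨c, hc⟩ := hφ.2 z h
      exact ⟨c, fun _ => hc⟩
    · exact ⟨0, fun h' => absurd h' h⟩
  choose uc huc using key
  -- the other neighbors of v
  set Nv : Finset V := G.neighborFinset v \ {u} with hNv
  have hNvmem : ∀ w, w ∈ Nv ↔ G.Adj v w ∧ w ≠ u := by
    intro w
    simp [hNv, SimpleGraph.mem_neighborFinset]
  have hNvcard : Nv.card = G.degree v - 1 := by
    rw [hNv, Finset.card_sdiff_of_subset (by simp [SimpleGraph.mem_neighborFinset, huv.symm])]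
    simp [SimpleGraph.card_neighborFinset_eq_degree]
  have hdv1 : 1 ≤ G.degree v := by
    have : u ∈ G.neighborFinset v := by
      simp [SimpleGraph.mem_neighborFinset, huv.symm]
    have := Finset.card_pos.mpr ⟨u, this⟩
    rwa [SimpleGraph.card_neighborFinset_eq_degree] at this
  -- picking a color outside a smaller forbidden set
  have pick : ∀ s F : Finset ℕ, F.card < s.card → ∃ c ∈ s, c ∉ F := by
    intro s F h
    by_contra hc
    push_neg at hc
    exact absurd (Finset.card_le_card hc) (not_le.mpr h)
  -- choose cv
  set Fv : Finset ℕ := insert (φ p) (Nv.image φ ∪ Nv.image uc) with hFv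
  have hFvcard : Fv.card < (L v).card := by
    have h1 : Fv.card ≤ 1 + ((Nv.image φ).card + (Nv.image uc).card) := by
      calc Fv.card ≤ (Nv.image φ ∪ Nv.image uc).card + 1 := Finset.card_insert_le _ _
        _ ≤ ((Nv.image φ).card + (Nv.image uc).card) + 1 := by
            exact Nat.add_le_add_right (Finset.card_union_le _ _) 1
        _ = 1 + ((Nv.image φ).card + (Nv.image uc).card) := by omega
    have h2 := Finset.card_image_le (s := Nv) (f := φ)
    have h3 := Finset.card_image_le (s := Nv) (f := uc)
    have h4 := hL v
    omega
  obtain ⟨cv, hcvL, hcvF⟩ := pick (L v) Fv hFvcard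
  have hcvp : cv ≠ φ p := by
    intro h
    apply hcvF
    rw [h]
    exact Finset.mem_insert_self _ _
  have hcvNφ : ∀ w ∈ Nv, cv ≠ φ w := by
    intro w hw h
    apply hcvF
    rw [h]
    exact Finset.mem_insert_of_mem
      (Finset.mem_union_left _ (Finset.mem_image_of_mem _ hw))
  have hcvNuc : ∀ w ∈ Nv, cv ≠ uc w := by
    intro w hw h
    apply hcvF
    rw [h]
    exact Finset.mem_insert_of_mem
      (Finset.mem_union_right _ (Finset.mem_image_of_mem _ hw))
  -- choose cu
  set S : Finset ℕ := Nv.image φ with hS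
  set Fu : Finset ℕ :=
    insert cv (insert (φ p) (insert (uc p) (if S.card ≤ 1 then S else ∅))) with hFu
  have hFucard : Fu.card < (L u).card := by
    have hScard : (if S.card ≤ 1 then S else (∅ : Finset ℕ)).card ≤ 1 := by
      split <;> simp_all
    have : Fu.card ≤ 1 + (1 + (1 + 1)) := by
      calc Fu.card ≤ _ + 1 := Finset.card_insert_le _ _
        _ ≤ (_ + 1) + 1 := by exact Nat.add_le_add_right (Finset.card_insert_le _ _) 1
        _ ≤ ((_ + 1) + 1) + 1 := by
            exact Nat.add_le_add_right (Nat.add_le_add_right (Finset.card_insert_le _ _) 1) 1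
        _ ≤ ((1 + 1) + 1) + 1 := by
            exact Nat.add_le_add_right (Nat.add_le_add_right
              (Nat.add_le_add_right hScard 1) 1) 1
        _ = 1 + (1 + (1 + 1)) := by omega
    have h4 := hL u
    omega
  obtain ⟨cu, hcuL, hcuF⟩ := pick (L u) Fu hFucard
  have hcucv : cu ≠ cv := by
    intro h
    apply hcuF
    rw [h]
    exact Finset.mem_insert_self _ _
  have hcup : cu ≠ φ p := by
    intro h
    apply hcuF
    rw [h]
    exact Finset.mem_insert_of_mem (Finset.mem_insert_self _ _)
  have hcuucp : cu ≠ uc p := by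
    intro h
    apply hcuF
    rw [h]
    exact Finset.mem_insert_of_mem (Finset.mem_insert_of_mem (Finset.mem_insert_self _ _))
  have hcuS : S.card ≤ 1 → cu ∉ S := by
    intro h hmem
    apply hcuF
    refine Finset.mem_insert_of_mem (Finset.mem_insert_of_mem
      (Finset.mem_insert_of_mem ?_))
    rw [if_pos h]
    exact hmem
  -- the extension
  set ψ : V → ℕ := fun z => if z = u then cu else if z = v then cv else φ z with hψdef
  have hψu : ψ u = cu := by simp [hψdef]
  have hψv : ψ v = cv := by simp [hψdef, Ne.symm huv']
  have hψo : ∀ z, z ≠ u → z ≠ v → ψ z = φ z := by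
    intro z h1 h2; simp [hψdef, h1, h2]
  have hpuv : p ≠ u ∧ p ≠ v := ⟨Ne.symm hup', hpv⟩
  have hψp : ψ p = φ p := hψo p hpuv.1 hpuv.2
  refine ⟨ψ, ?_, ?_, ?_, ?_⟩
  · intro z hz
    simp only [Set.mem_insert_iff, Set.mem_singleton_iff] at hz
    push_neg at hz
    exact hψo z hz.1 hz.2
  · -- membership in lists
    intro z
    by_cases h1 : z = u
    · subst h1; rwa [hψu]
    by_cases h2 : z = v
    · subst h2; rwa [hψv]
    · rw [hψo z h1 h2]
      exact hφL z (by simp [h1, h2])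
  · -- properness
    intro a b hab
    by_cases ha1 : a = u
    · subst ha1
      rcases hNu b hab with rfl | rfl
      · rw [hψu, hψv]; exact hcucv
      · rw [hψu, hψp]; exact hcup
    by_cases hb1 : b = u
    · subst hb1
      rcases hNu a hab.symm with rfl | rfl
      · rw [hψu, hψv]; exact Ne.symm hcucv
      · rw [hψu, hψp]; exact fun h => hcup h.symm
    by_cases ha2 : a = v
    · subst ha2
      have hbN : b ∈ Nv := (hNvmem b).mpr ⟨hab, hb1⟩
      rw [hψv, hψo b hb1 (G.ne_of_adj hab.symm)]
      exact hcvNφ b hbN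
    by_cases hb2 : b = v
    · subst hb2
      have haN : a ∈ Nv := (hNvmem a).mpr ⟨hab.symm, ha1⟩
      rw [hψv, hψo a ha1 (G.ne_of_adj hab)]
      exact fun h => (hcvNφ a haN) h.symm
    · rw [hψo a ha1 ha2, hψo b hb1 hb2]
      exact hφ.1 ((hDadj a b).mpr ⟨hab, ⟨ha1, ha2⟩, ⟨hb1, hb2⟩⟩)
  · -- conflict-freeness
    intro z hz
    by_cases hzu : z = u
    · subst hzu
      refine ⟨cv, v, ⟨huv, hψv⟩, ?_⟩
      rintro w ⟨hw, hwc⟩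
      rcases hNu w hw with rfl | rfl
      · rfl
      · rw [hψp] at hwc; exact absurd hwc.symm hcvp
    by_cases hzv : z = v
    · subst hzv
      by_cases hScard : S.card ≤ 1
      · refine ⟨cu, u, ⟨huv.symm, hψu⟩, ?_⟩
        rintro w ⟨hw, hwc⟩
        by_cases hwu : w = u
        · exact hwu
        · exfalso
          have hwN : w ∈ Nv := (hNvmem w).mpr ⟨hw, hwu⟩
          rw [hψo w hwu (G.ne_of_adj hw.symm)] at hwc
          exact hcuS hScard (hwc ▸ Finset.mem_image_of_mem φ hwN)
      · push_neg at hScard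
        have hNv2 : Nv.card = 2 := by
          have h1 := Finset.card_image_le (s := Nv) (f := φ)
          rw [← hS] at h1
          omega
        obtain ⟨a, b, hab, hNveq⟩ := Finset.card_eq_two.mp hNv2
        have haN : a ∈ Nv := by rw [hNveq]; simp
        have hbN : b ∈ Nv := by rw [hNveq]; simp
        have hav : G.Adj z a ∧ a ≠ u := (hNvmem a).mp haN
        have hbv : G.Adj z b ∧ b ≠ u := (hNvmem b).mp hbN
        have hφab : φ a ≠ φ b := by
          intro h
          have : S ⊆ {φ b} := by
            intro x hx
            rw [hS, hNveq] at hx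
            simp only [Finset.image_insert, Finset.image_singleton,
              Finset.mem_insert, Finset.mem_singleton] at hx
            rcases hx with rfl | rfl <;> simp [h]
          have := Finset.card_le_card this
          simp at this
          omega
        have hwNv : ∀ w, G.Adj z w → w = u ∨ w = a ∨ w = b := by
          intro w hw
          by_cases hwu : w = u
          · exact Or.inl hwu
          · have : w ∈ Nv := (hNvmem w).mpr ⟨hw, hwu⟩
            rw [hNveq] at this
            simp only [Finset.mem_insert, Finset.mem_singleton] at this
            exact Or.inr this
        have hψa : ψ a = φ a := hψo a hav.2 (G.ne_of_adj hav.1.symm)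
        have hψb : ψ b = φ b := hψo b hbv.2 (G.ne_of_adj hbv.1.symm)
        by_cases hca : cu = φ a
        · refine ⟨φ b, b, ⟨hbv.1, hψb⟩, ?_⟩
          rintro w ⟨hw, hwc⟩
          rcases hwNv w hw with rfl | rfl | rfl
          · rw [hψu] at hwc; rw [hca] at hwc; exact absurd hwc hφab
          · rw [hψa] at hwc; exact absurd hwc hφab
          · rfl
        by_cases hcb : cu = φ b
        · refine ⟨φ a, a, ⟨hav.1, hψa⟩, ?_⟩
          rintro w ⟨hw, hwc⟩
          rcases hwNv w hw with rfl | rfl | rfl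
          · rw [hψu] at hwc; rw [hcb] at hwc; exact absurd hwc.symm hφab
          · rfl
          · rw [hψb] at hwc; exact absurd hwc.symm hφab
        · refine ⟨cu, u, ⟨huv.symm, hψu⟩, ?_⟩
          rintro w ⟨hw, hwc⟩
          rcases hwNv w hw with rfl | rfl | rfl
          · rfl
          · rw [hψa] at hwc; exact absurd hwc.symm hca
          · rw [hψb] at hwc; exact absurd hwc.symm hcb
    -- z outside {u, v}
    · by_cases hDz : ∃ w, D.Adj z w
      · obtain ⟨w₀, ⟨hw₀adj, hw₀c⟩, hw₀uniq⟩ := huc z hDz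
        have hw₀ := (hDadj z w₀).mp hw₀adj
        refine ⟨uc z, w₀, ⟨hw₀.1, by rw [hψo w₀ hw₀.2.2.1 hw₀.2.2.2]; exact hw₀c⟩, ?_⟩
        rintro w ⟨hw, hwc⟩
        by_cases hwu : w = u
        · subst hwu
          exfalso
          rcases hNu z hw.symm with rfl | rfl
          · exact hzv rfl
          · rw [hψu] at hwc; exact hcuucp hwc
        by_cases hwv : w = v
        · subst hwv
          exfalso
          have hzN : z ∈ Nv := (hNvmem z).mpr ⟨hw.symm, hzu⟩
          rw [hψv] at hwc
          exact hcvNuc z hzN hwc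
        · rw [hψo w hwu hwv] at hwc
          exact hw₀uniq w ⟨(hDadj z w).mpr ⟨hw, ⟨hzu, hzv⟩, ⟨hwu, hwv⟩⟩, hwc⟩
      · have hsub : ∀ w, G.Adj z w → w = u ∨ w = v := by
          intro w hw
          by_contra hcon
          push_neg at hcon
          exact hDz ⟨w, (hDadj z w).mpr ⟨hw, ⟨hzu, hzv⟩, hcon⟩⟩
        by_cases hadjzu : G.Adj z u
        · refine ⟨cu, u, ⟨hadjzu, hψu⟩, ?_⟩
          rintro w ⟨hw, hwc⟩
          rcases hsub w hw with rfl | rfl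
          · rfl
          · rw [hψv] at hwc; exact absurd hwc hcucv.symm
        · obtain ⟨w₁, hw₁⟩ := hz
          have hw₁v : w₁ = v := by
            rcases hsub w₁ hw₁ with rfl | rfl
            · exact absurd hw₁ hadjzu
            · rfl
          rw [hw₁v] at hw₁
          refine ⟨cv, v, ⟨hw₁, hψv⟩, ?_⟩
          rintro w ⟨hw, hwc⟩
          rcases hsub w hw with rfl | rfl
          · exact absurd hw hadjzu
          · rfl
end
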